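/- arXiv:1002.3247 — 4 statements merged into one kernel-verified Lean document; each statement's English description precedes it below -/
import Mathlib

section
/- Let Λ be a finite-dimensional algebra over a field k and M a finite length Λ-module with a simple direct summand S. Let Γ = End_Λ(M) and let e ∈ Γ be the idempotent corresponding to the projection onto S. Then the ideal I = ΓeΓ is a projective left Γ-module. -/
/-!
Write `Γ = End_Λ(M)` and `D = End_Λ(S)`, a division ring by Schur's lemma. As `S` is a retract
of `M`, `Hom_Λ(S, M)` is a retract of `Γ`, hence a projective left `Γ`-module, and `ΓeΓ` is the
`Γ`-span of all composites `g ∘ h` with `g : S → M`, `h : M → S`. For a `D`-basis `(f_b)` of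
`Hom_Λ(M, S)`, the map `(g_b) ↦ ∑ g_b ∘ f_b` from `⊕_B Hom_Λ(S, M)` onto `ΓeΓ` is an isomorphism.
Injectivity is a density argument: if the `f_b` are `D`-linearly independent, each `f_b` maps
the common kernel of finitely many others onto the simple module `S`, since otherwise `f_b`
would be a `D`-combination of them.
-/

open LinearMap Module

section SimpleTarget

variable {Λ : Type*} [Ring Λ] {M N S : Type*} [AddCommGroup M] [Module Λ M]
  [AddCommGroup N] [Module Λ N] [AddCommGroup S] [Module Λ S] [IsSimpleModule Λ S]

theorem exists_comp_eq_of_ker_le_ker {φ h : M →ₗ[Λ] S} (hker : ker φ ≤ ker h) :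
    ∃ d : End Λ S, h = d ∘ₗ φ := by
  rcases eq_bot_or_eq_top (range φ) with hφ | hφ
  · refine ⟨0, ext fun x => ?_⟩
    have : x ∈ ker φ := by simp [range_eq_bot.mp hφ]
    simpa using hker this
  · let q := φ.quotKerEquivOfSurjective (range_eq_top.mp hφ)
    refine ⟨(ker φ).liftQ h hker ∘ₗ q.symm.toLinearMap, ext fun x => ?_⟩
    have : q.symm (φ x) = Submodule.Quotient.mk x := q.symm_apply_eq.mpr rfl
    simp [this]

theorem exists_eq_sum_smul_of_iInf_ker_le_ker {ι : Type*} (t : Finset ι)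
    (f : ι → M →ₗ[Λ] S) (g : M →ₗ[Λ] S) (hker : ⨅ i ∈ t, ker (f i) ≤ ker g) :
    ∃ c : ι → End Λ S, g = ∑ i ∈ t, c i • f i := by
  classical
  induction t using Finset.induction_on generalizing M with
  | empty =>
    refine ⟨0, ext fun x => ?_⟩
    have : x ∈ ⨅ i ∈ (∅ : Finset ι), ker (f i) := by simp
    simpa using hker this
  | insert a s ha ih =>
    let K := ker (f a)
    obtain ⟨c, hc⟩ := ih (fun i => f i ∘ₗ K.subtype) (g ∘ₗ K.subtype) fun x hx => by
      refine hker ?_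
      simp only [Submodule.mem_iInf, Finset.mem_insert, mem_ker, forall_eq_or_imp] at hx ⊢
      exact ⟨x.2, hx⟩
    obtain ⟨d, hd⟩ : ∃ d : End Λ S, g - ∑ i ∈ s, c i • f i = d ∘ₗ f a := by
      refine exists_comp_eq_of_ker_le_ker fun x hx => ?_
      simpa [sub_eq_zero] using congr($hc ⟨x, hx⟩)
    refine ⟨Function.update c a d, ?_⟩
    have hs : ∑ i ∈ s, Function.update c a d i • f i = ∑ i ∈ s, c i • f i :=
      Finset.sum_congr rfl fun i hi => by rw [Function.update_of_ne (ne_of_mem_of_not_mem hi ha)]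
    rw [Finset.sum_insert ha, hs, Function.update_self]
    exact eq_add_of_sub_eq hd

theorem LinearIndependent.map_iInf_ker_eq_top {ι : Type*} {f : ι → M →ₗ[Λ] S}
    (hf : LinearIndependent (End Λ S) f) {t : Finset ι} {i : ι} (hi : i ∉ t) :
    (⨅ j ∈ t, ker (f j)).map (f i) = ⊤ := by
  refine (eq_bot_or_eq_top _).resolve_left fun hbot => ?_
  obtain ⟨c, hc⟩ :=
    exists_eq_sum_smul_of_iInf_ker_le_ker t f (f i) (le_ker_iff_map.mpr hbot)
  have := IsSimpleModule.nontrivial Λ S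
  refine hf.notMem_span_image (s := t) hi ?_
  rw [hc]
  exact Submodule.sum_mem _ fun j hj => Submodule.smul_mem _ _ (Submodule.subset_span ⟨j, hj, rfl⟩)

theorem LinearIndependent.eq_zero_of_sum_comp_eq_zero {ι : Type*} {f : ι → M →ₗ[Λ] S}
    (hf : LinearIndependent (End Λ S) f) {t : Finset ι} {g : ι → S →ₗ[Λ] N}
    (hsum : ∑ j ∈ t, g j ∘ₗ f j = 0) {i : ι} (hi : i ∈ t) : g i = 0 := by
  classical
  ext s
  obtain ⟨x, hx, rfl⟩ : s ∈ (⨅ j ∈ t.erase i, ker (f j)).map (f i) := by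
    rw [hf.map_iInf_ker_eq_top (t.notMem_erase i)]
    trivial
  have hx' : ∀ j ∈ t, j ≠ i → f j x = 0 := fun j hj hji =>
    (Submodule.mem_iInf _).mp ((Submodule.mem_iInf _).mp hx j) (Finset.mem_erase.mpr ⟨hji, hj⟩)
  have := congr($hsum x)
  simp only [LinearMap.sum_apply, comp_apply, LinearMap.zero_apply] at this
  rwa [Finset.sum_eq_single_of_mem i hi fun j hj hji => by rw [hx' j hj hji, map_zero]] at this

end SimpleTarget

section Composition

variable {Λ : Type*} [Ring Λ] {M S : Type*} [AddCommGroup M] [Module Λ M]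
  [AddCommGroup S] [Module Λ S]

theorem projective_linearMap_of_comp_eq_id {ι : S →ₗ[Λ] M} {π : M →ₗ[Λ] S}
    (hsplit : π ∘ₗ ι = LinearMap.id) : Projective (End Λ M) (S →ₗ[Λ] M) :=
  .of_split (lcomp (End Λ M) M π) (lcomp (End Λ M) M ι) <| LinearMap.ext fun g => by
    simp [lcomp_apply', comp_assoc, hsplit]

theorem exists_mul_comp_mul_iff_exists_comp {ι : S →ₗ[Λ] M} {π : M →ₗ[Λ] S}
    (hsplit : π ∘ₗ ι = LinearMap.id) (x : End Λ M) :
    (∃ a b : End Λ M, x = a * (ι ∘ₗ π) * b) ↔ ∃ (g : S →ₗ[Λ] M) (h : M →ₗ[Λ] S), x = g ∘ₗ h := by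
  constructor
  · rintro ⟨a, b, rfl⟩
    exact ⟨a ∘ₗ ι, π ∘ₗ b, rfl⟩
  · rintro ⟨g, h, rfl⟩
    refine ⟨g ∘ₗ π, ι ∘ₗ h, ?_⟩
    have hπι (s : S) : π (ι s) = s := congr($hsplit s)
    ext x
    simp [hπι]

noncomputable def sumComp {B : Type*} (f : B → M →ₗ[Λ] S) :
    (B →₀ (S →ₗ[Λ] M)) →ₗ[End Λ M] End Λ M :=
  Finsupp.lsum ℕ fun i => lcomp (End Λ M) M (f i)

theorem sumComp_apply {B : Type*} (f : B → M →ₗ[Λ] S) (w : B →₀ (S →ₗ[Λ] M)) :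
    sumComp f w = ∑ i ∈ w.support, w i ∘ₗ f i := rfl

theorem sumComp_single {B : Type*} (f : B → M →ₗ[Λ] S) (i : B) (g : S →ₗ[Λ] M) :
    sumComp f (Finsupp.single i g) = g ∘ₗ f i := by
  rw [sumComp, Finsupp.lsum_single]
  rfl

theorem range_sumComp {B : Type*} {f : B → M →ₗ[Λ] S}
    (hf : Submodule.span (End Λ S) (Set.range f) = ⊤) :
    range (sumComp f) = Submodule.span (End Λ M)
      {x | ∃ (g : S →ₗ[Λ] M) (h : M →ₗ[Λ] S), x = g ∘ₗ h} := by
  refine le_antisymm ?_ (Submodule.span_le.mpr ?_)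
  · rintro _ ⟨w, rfl⟩
    rw [sumComp_apply]
    exact Submodule.sum_mem _ fun i _ => Submodule.subset_span ⟨w i, f i, rfl⟩
  · rintro _ ⟨g, h, rfl⟩
    have hh : h ∈ Submodule.span (End Λ S) (Set.range f) := hf ▸ Submodule.mem_top
    induction hh using Submodule.span_induction generalizing g with
    | mem _ hf' =>
      obtain ⟨i, rfl⟩ := hf'
      exact ⟨Finsupp.single i g, sumComp_single f i g⟩
    | zero => simp
    | add _ _ _ _ h₁ h₂ => simpa [comp_add] using add_mem (h₁ g) (h₂ g)
    | smul c _ _ ih => exact ih (g ∘ₗ c)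

theorem sumComp_injective [IsSimpleModule Λ S] {B : Type*} {f : B → M →ₗ[Λ] S}
    (hf : LinearIndependent (End Λ S) f) : Function.Injective (sumComp f) := by
  refine (injective_iff_map_eq_zero _).mpr fun w hw => Finsupp.ext fun i => ?_
  by_contra hi
  exact hi (hf.eq_zero_of_sum_comp_eq_zero ((sumComp_apply f w).symm.trans hw)
    (Finsupp.mem_support_iff.mpr hi))

end Composition

instance Module.Projective.finsupp {R P B : Type*} [Semiring R] [AddCommMonoid P] [Module R P]
    [Projective R P] : Projective R (B →₀ P) := by
  classical
  exact .of_equiv (finsuppLequivDFinsupp R).symm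

theorem twoSidedIdeal_of_simple_summand_projective_general
    (Λ : Type) [Ring Λ]
    (M S : Type) [AddCommGroup M] [Module Λ M] [AddCommGroup S] [Module Λ S]
    (_hS : IsSimpleModule Λ S)
    (ι : S →ₗ[Λ] M) (π : M →ₗ[Λ] S) (_hsplit : π ∘ₗ ι = LinearMap.id)
    (e : Module.End Λ M) (_he : e = ι ∘ₗ π)
    (I : Submodule (Module.End Λ M) (Module.End Λ M))
    (_hI : I = Submodule.span (Module.End Λ M)
      {x : Module.End Λ M | ∃ a b : Module.End Λ M, x = a * e * b}) :
    Module.Projective (Module.End Λ M) I := by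
  classical
  subst _he _hI
  have := projective_linearMap_of_comp_eq_id _hsplit
  let f := Basis.ofVectorSpace (End Λ S) (M →ₗ[Λ] S)
  have hrange : range (sumComp f) =
      Submodule.span (End Λ M) {x | ∃ a b : End Λ M, x = a * (ι ∘ₗ π) * b} := by
    simp_rw [range_sumComp f.span_eq, exists_mul_comp_mul_iff_exists_comp _hsplit]
  exact .of_equiv ((LinearEquiv.ofInjective _ (sumComp_injective f.linearIndependent)).trans
    (LinearEquiv.ofEq _ _ hrange))

theorem twoSidedIdeal_of_simple_summand_projective
    (k : Type) [Field k] (Λ : Type) [Ring Λ] [Algebra k Λ] [FiniteDimensional k Λ]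
    (M S : Type) [AddCommGroup M] [Module Λ M] [AddCommGroup S] [Module Λ S]
    (_hlen : IsFiniteLength Λ M) (_hS : IsSimpleModule Λ S)
    (ι : S →ₗ[Λ] M) (π : M →ₗ[Λ] S) (_hsplit : π ∘ₗ ι = LinearMap.id)
    (e : Module.End Λ M) (_he : e = ι ∘ₗ π)
    (I : Submodule (Module.End Λ M) (Module.End Λ M))
    (_hI : I = Submodule.span (Module.End Λ M)
      {x : Module.End Λ M | ∃ a b : Module.End Λ M, x = a * e * b}) :
    Module.Projective (Module.End Λ M) I :=
  twoSidedIdeal_of_simple_summand_projective_general Λ M S _hS ι π _hsplit e _he I _hI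
end

section
/- In the setting of the previous lemma, each Δᵢ = Hom_C(Ker fᵢ, M) has composition factors only among the simple Γ-modules S_r with r ≥ i, and Δᵢ is the largest quotient of the indecomposable projective Γ-module Hom_C(Mᵢ, M) with this property. -/
open CategoryTheory CategoryTheory.Limits

attribute [local instance] CategoryTheory.Limits.HasFiniteBiproducts.of_hasFiniteProducts
attribute [local instance] CategoryTheory.Limits.hasBinaryBiproducts_of_finite_biproducts

/-!
STATEMENT 4. In the setting of the approximation lemma (Statement 3), each
Δᵢ = Hom_C(Ker fᵢ, M) has composition factors only among the simple Γ-modules S_r with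
r ≥ i, and Δᵢ is the largest quotient of the indecomposable projective Γ-module
Hom_C(Mᵢ, M) with this property.

The first claim is expressed by: every simple subquotient of Δᵢ admits a nonzero
Γ-linear map from the projective Hom_C(M_r, M) for some r ≥ i (for a simple module T,
a nonzero map P_r → T exists iff T ≅ S_r = top P_r).
The second claim is expressed by: the kernel of the natural surjection
Hom_C(Mᵢ, M) → Δᵢ (precomposition with Ker fᵢ → Mᵢ) equals the trace
⨆_{j<i} ⨆_{φ : Hom(Mⱼ,M) →ₗ Hom(Mᵢ,M)} range φ of the projectives with index < i.
-/

universe v u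

noncomputable instance homEndModule {𝒜 : Type u} [Category.{v} 𝒜] [Abelian 𝒜] (X M : 𝒜) :
    Module (End M) (X ⟶ M) where
  smul γ φ := φ ≫ γ
  one_smul φ := Category.comp_id φ
  mul_smul γ δ φ := (Category.assoc φ δ γ).symm
  smul_zero _ := Limits.zero_comp
  smul_add _ _ _ := Preadditive.add_comp _ _ _ _ _ _
  add_smul _ _ _ := Preadditive.comp_add _ _ _ _ _ _
  zero_smul _ := Limits.comp_zero

def BelowAdd {𝒜 : Type u} [Category.{v} 𝒜] [Abelian 𝒜] {n : ℕ} (Mi : Fin n → 𝒜)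
    (i : Fin n) (X : 𝒜) : Prop :=
  ∃ (m : ℕ) (s : X ⟶ ⨁ fun q : Fin m × {j : Fin n // j < i} => Mi q.2.1)
    (r : (⨁ fun q : Fin m × {j : Fin n // j < i} => Mi q.2.1) ⟶ X), s ≫ r = 𝟙 X

/-- The `Γ`-linear precomposition map `Hom(Y, M) → Hom(X, M)` along `g : X ⟶ Y`. -/
noncomputable def preMap {𝒜 : Type u} [Category.{v} 𝒜] [Abelian 𝒜] {X Y M : 𝒜}
    (g : X ⟶ Y) : (Y ⟶ M) →ₗ[End M] (X ⟶ M) where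
  toFun φ := g ≫ φ
  map_add' _ _ := Preadditive.comp_add _ _ _ _ _ _
  map_smul' γ φ := (Category.assoc g φ γ).symm

/-!
Write `Γ = End M`. Pulling an extension `0 → M → E → X → 0` back along `M ⟶ X` gives an extension
of `M` by `M`, which lies in `C` and therefore splits; so every object of `add(M)`, in particular
`Mᵢ'`, lifts along `E → X`, and all extensions of `Mᵢ'` by `M` split. Pushing
`0 → Ker fᵢ → Mᵢ → Mᵢ' → 0` out along a map `Ker fᵢ ⟶ M` then shows that this map extends to `Mᵢ`.

A `Γ`-map `Hom(M_r, M) → Δᵢ` is precomposition with some `Ker fᵢ ⟶ M_r`. For `r < i` it extends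
to `Mᵢ ⟶ M_r`, which factors through `fᵢ` and so vanishes on `Ker fᵢ`; as `Hom(M_r, M)` is
projective, it then maps trivially to every subquotient of `Δᵢ` too, while each nonzero
`Γ`-module receives a nonzero map from some `Hom(M_r, M)`. Finally, the kernel of
`Hom(Mᵢ, M) → Δᵢ` consists of the maps factoring through `fᵢ`, i.e. through `add(M_{<i})`,
which is exactly the trace of the `Hom(M_j, M)` with `j < i`.
-/

lemma Module.Projective.linearMap_subquotient_eq_zero {R P V : Type*} [Ring R]
    [AddCommGroup P] [Module R P] [Module.Projective R P] [AddCommGroup V] [Module R V]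
    (h : ∀ ψ : P →ₗ[R] V, ψ = 0) {N' N : Submodule R V}
    (ψ : P →ₗ[R] N ⧸ N'.comap N.subtype) : ψ = 0 := by
  obtain ⟨ψN, rfl⟩ := Module.projective_lifting_property _ ψ (Submodule.mkQ_surjective _)
  obtain rfl : ψN = 0 :=
    (LinearMap.cancel_left N.injective_subtype).1 (by rw [h (N.subtype ∘ₗ ψN), LinearMap.comp_zero])
  exact LinearMap.comp_zero _

section HomModule

variable {𝒜 : Type u} [Category.{v} 𝒜] [Abelian 𝒜]

@[simp]
lemma preMap_apply {X Y M : 𝒜} (g : X ⟶ Y) (φ : Y ⟶ M) : preMap (M := M) g φ = g ≫ φ := rfl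

lemma homEndModule_smul {X M : 𝒜} (γ : End M) (φ : X ⟶ M) : γ • φ = φ ≫ γ := rfl

-- `End M` acts on `M ⟶ M` by left multiplication, since `γ * δ = δ ≫ γ`.
def endHomLinearEquiv (M : 𝒜) : (M ⟶ M) ≃ₗ[End M] End M where
  toFun γ := γ
  invFun γ := γ
  map_add' _ _ := rfl
  map_smul' _ _ := rfl
  left_inv _ := rfl
  right_inv _ := rfl

lemma projective_hom_of_retract {X M : 𝒜} (R : Retract X M) :
    Module.Projective (End M) (X ⟶ M) :=
  have : Module.Projective (End M) (M ⟶ M) := .of_equiv (endHomLinearEquiv M).symm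
  .of_split (preMap R.r) (preMap R.i) (LinearMap.ext fun χ => by simp)

lemma linearMap_eq_preMap {X Y M : 𝒜} (R : Retract X M) (φ : (X ⟶ M) →ₗ[End M] (Y ⟶ M)) :
    φ = preMap (φ R.i ≫ R.r) := by
  ext χ
  have hχ : χ = (show End M from R.r ≫ χ) • R.i := by simp [homEndModule_smul]
  rw [preMap_apply, hχ, map_smul, homEndModule_smul, Category.assoc, ← hχ]

noncomputable def retractOfIsoBiproduct {ι : Type*} {M : 𝒜} (Z : ι → 𝒜) [HasBiproduct Z]
    (e : M ≅ ⨁ Z) (r : ι) : Retract (Z r) M :=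
  ((biproduct.bicone Z).retract r).trans (Retract.ofIso e.symm)

lemma sum_retractOfIsoBiproduct {ι : Type} [Fintype ι] {M : 𝒜} (Z : ι → 𝒜) [HasBiproduct Z]
    (e : M ≅ ⨁ Z) :
    ∑ r, (retractOfIsoBiproduct Z e r).r ≫ (retractOfIsoBiproduct Z e r).i = 𝟙 M := by
  calc ∑ r, (e.hom ≫ biproduct.π Z r) ≫ biproduct.ι Z r ≫ e.inv
      = e.hom ≫ (∑ r, biproduct.π Z r ≫ biproduct.ι Z r) ≫ e.inv := by
        simp only [Preadditive.sum_comp, Preadditive.comp_sum, Category.assoc]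
    _ = 𝟙 M := by simp

lemma exists_linearMap_ne_zero {ι : Type} [Fintype ι] {M : 𝒜} {Z : ι → 𝒜} [HasBiproduct Z]
    (e : M ≅ ⨁ Z) {T : Type*} [AddCommGroup T] [Module (End M) T] {t : T} (ht : t ≠ 0) :
    ∃ r, ∃ ψ : (Z r ⟶ M) →ₗ[End M] T, ψ ≠ 0 := by
  by_contra! h
  let Φ := (LinearMap.toSpanSingleton (End M) T t).comp (endHomLinearEquiv M).toLinearMap
  let R := retractOfIsoBiproduct Z e
  apply ht
  calc t = Φ (𝟙 M) := (one_smul _ t).symm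
    _ = ∑ r, (Φ.comp (preMap (R r).r)) (R r).i := by
      rw [← sum_retractOfIsoBiproduct Z e, map_sum]
      rfl
    _ = 0 := by simp [h]

end HomModule

section Lifting

variable {𝒜 : Type u} [Category.{v} 𝒜]

def LiftsAlong {E X : 𝒜} (b : E ⟶ X) (P : 𝒜) : Prop :=
  ∀ u : P ⟶ X, ∃ l : P ⟶ E, l ≫ b = u

lemma LiftsAlong.of_retract {E X P Q : 𝒜} {b : E ⟶ X} (hQ : LiftsAlong b Q)
    (R : Retract P Q) : LiftsAlong b P := fun u => by
  obtain ⟨l, hl⟩ := hQ (R.r ≫ u)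
  exact ⟨R.i ≫ l, by simp [hl]⟩

lemma LiftsAlong.biproduct [HasZeroMorphisms 𝒜] {E X : 𝒜} {b : E ⟶ X} {ι : Type} [Finite ι]
    {Z : ι → 𝒜} [HasBiproduct Z] (h : ∀ j, LiftsAlong b (Z j)) : LiftsAlong b (⨁ Z) := fun u => by
  choose l hl using fun j => h j (biproduct.ι Z j ≫ u)
  exact ⟨biproduct.desc l, biproduct.hom_ext' _ _ fun j => by simp [hl]⟩

variable [Abelian 𝒜]

lemma BelowAdd.liftsAlong {n : ℕ} {Mi : Fin n → 𝒜} {i : Fin n} {E X Y : 𝒜} {b : E ⟶ X}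
    (hY : BelowAdd Mi i Y) (h : ∀ j, LiftsAlong b (Mi j)) : LiftsAlong b Y := by
  obtain ⟨m, s, r, hsr⟩ := hY
  exact (LiftsAlong.biproduct fun q : Fin m × {j : Fin n // j < i} => h q.2.1).of_retract
    ⟨s, r, hsr⟩

lemma belowAdd_of_lt {n : ℕ} (Mi : Fin n → 𝒜) {i j : Fin n} (hj : j < i) :
    BelowAdd Mi i (Mi j) :=
  ⟨1, biproduct.ι (fun q : Fin 1 × {j : Fin n // j < i} => Mi q.2.1) (0, ⟨j, hj⟩),
    biproduct.π (fun q : Fin 1 × {j : Fin n // j < i} => Mi q.2.1) (0, ⟨j, hj⟩),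
    biproduct.ι_π_self _ _⟩

lemma shortExact_pullback {M E X Z : 𝒜} {a : M ⟶ E} {b : E ⟶ X} {w : a ≫ b = 0}
    (hS : (ShortComplex.mk a b w).ShortExact) (u : Z ⟶ X) :
    (ShortComplex.mk (pullback.lift a 0 (by simp [w]) : M ⟶ pullback b u) (pullback.snd b u)
      (pullback.lift_snd _ _ _)).ShortExact := by
  have : Mono a := hS.mono_f
  have : Epi b := hS.epi_g
  have : Mono (pullback.lift a 0 (by simp [w]) : M ⟶ pullback b u) :=
    mono_of_mono_fac (pullback.lift_fst _ _ _)
  refine .mk' (ShortComplex.exact_of_f_is_kernel _ ?_) inferInstance inferInstance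
  refine KernelFork.IsLimit.ofι' _ _ fun {W} t (ht : t ≫ pullback.snd b u = 0) => ?_
  obtain ⟨l, hl⟩ := KernelFork.IsLimit.lift' hS.fIsKernel (t ≫ pullback.fst b u)
    (by simp [pullback.condition, reassoc_of% ht])
  refine ⟨l, pullback.hom_ext ?_ ?_⟩
  · rw [Category.assoc, pullback.lift_fst]
    exact hl
  · rw [Category.assoc, pullback.lift_snd, comp_zero, ht]

lemma liftsAlong_of_shortExact {M E X : 𝒜} (C : Set 𝒜) (hM : M ∈ C)
    (hext : ∀ S : ShortComplex 𝒜, S.ShortExact → S.X₁ ∈ C → S.X₃ ∈ C → S.X₂ ∈ C)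
    (hrigid : ∀ (E : 𝒜), E ∈ C → ∀ (f : M ⟶ E) (g : E ⟶ M) (w : f ≫ g = 0),
      (ShortComplex.mk f g w).ShortExact → ∃ s : M ⟶ E, s ≫ g = 𝟙 M)
    {a : M ⟶ E} {b : E ⟶ X} {w : a ≫ b = 0} (hS : (ShortComplex.mk a b w).ShortExact) :
    LiftsAlong b M := fun u => by
  have hP := shortExact_pullback hS u
  obtain ⟨s, hs⟩ := hrigid _ (hext _ hP hM hM) _ _ _ hP
  exact ⟨s ≫ pullback.fst b u, by simp [pullback.condition, reassoc_of% hs]⟩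

lemma shortExact_pushout {K Y X M : 𝒜} {ι : K ⟶ Y} {f : Y ⟶ X} {w : ι ≫ f = 0}
    (hS : (ShortComplex.mk ι f w).ShortExact) (g : K ⟶ M) :
    (ShortComplex.mk (pushout.inl g ι) (pushout.desc 0 f (by simp [w]) : pushout g ι ⟶ X)
      (pushout.inl_desc _ _ _)).ShortExact := by
  have : Mono ι := hS.mono_f
  have : Epi f := hS.epi_g
  have : Epi (pushout.desc 0 f (by simp [w]) : pushout g ι ⟶ X) :=
    epi_of_epi_fac (pushout.inr_desc _ _ _)
  refine .mk' (ShortComplex.exact_of_g_is_cokernel _ ?_) inferInstance inferInstance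
  refine CokernelCofork.IsColimit.ofπ' _ _ fun {W} t (ht : pushout.inl g ι ≫ t = 0) => ?_
  obtain ⟨d, hd⟩ := CokernelCofork.IsColimit.desc' hS.gIsCokernel (pushout.inr g ι ≫ t)
    (by simp [← pushout.condition_assoc, ht])
  refine ⟨d, pushout.hom_ext ?_ ?_⟩
  · rw [← Category.assoc, pushout.inl_desc, zero_comp, ht]
  · rw [← Category.assoc, pushout.inr_desc]
    exact hd

lemma exists_extension_of_shortExact {K Y X M : 𝒜} {ι : K ⟶ Y} {f : Y ⟶ X} {w : ι ≫ f = 0}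
    (hS : (ShortComplex.mk ι f w).ShortExact)
    (hsplit : ∀ ⦃E : 𝒜⦄ (a : M ⟶ E) (b : E ⟶ X) (w : a ≫ b = 0),
      (ShortComplex.mk a b w).ShortExact → ∃ s : X ⟶ E, s ≫ b = 𝟙 X)
    (g : K ⟶ M) : ∃ G : Y ⟶ M, ι ≫ G = g := by
  have hT := shortExact_pushout hS g
  obtain ⟨s, hs⟩ := hsplit _ _ _ hT
  let σ := ShortComplex.Splitting.ofExactOfSection _ hT.exact s hs hT.mono_f
  exact ⟨pushout.inr g ι ≫ σ.r, by simpa [← pushout.condition_assoc] using g ≫= σ.f_r⟩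

end Lifting

section StandardModule

variable {𝒜 : Type u} [Category.{v} 𝒜] [Abelian 𝒜]

lemma linearMap_eq_zero_of_comp_eq_zero {K Y Z M : 𝒜} {ι : K ⟶ Y}
    (hext : ∀ g : K ⟶ M, ∃ G : Y ⟶ M, ι ≫ G = g) (hι : ∀ g : Y ⟶ Z, ι ≫ g = 0)
    (R : Retract Z M) (ψ : (Z ⟶ M) →ₗ[End M] (K ⟶ M)) : ψ = 0 := by
  obtain ⟨G, hG⟩ := hext (ψ R.i)
  rw [linearMap_eq_preMap R ψ, ← hG, Category.assoc, hι]
  exact LinearMap.ext fun χ => by simp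

lemma range_le_ker_preMap {K Y Z M : 𝒜} {ι : K ⟶ Y} (hι : ∀ g : Y ⟶ Z, ι ≫ g = 0)
    (R : Retract Z M) (φ : (Z ⟶ M) →ₗ[End M] (Y ⟶ M)) :
    LinearMap.range φ ≤ LinearMap.ker (preMap ι) := by
  rintro _ ⟨χ, rfl⟩
  rw [linearMap_eq_preMap R φ, LinearMap.mem_ker, preMap_apply, preMap_apply,
    ← Category.assoc, hι, zero_comp]

lemma BelowAdd.comp_mem_iSup_range {n : ℕ} {Mi : Fin n → 𝒜} {i : Fin n} {X Y M : 𝒜}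
    (hX : BelowAdd Mi i X) (a : Y ⟶ X) (b : X ⟶ M) :
    a ≫ b ∈ ⨆ (j : Fin n) (_ : j < i) (φ : (Mi j ⟶ M) →ₗ[End M] (Y ⟶ M)),
      LinearMap.range φ := by
  obtain ⟨m, s, r, hsr⟩ := hX
  let B := fun q : Fin m × {j : Fin n // j < i} => Mi q.2.1
  have hab : a ≫ b = ∑ q, preMap (a ≫ s ≫ biproduct.π B q) (biproduct.ι B q ≫ r ≫ b) :=
    calc a ≫ b = a ≫ s ≫ (∑ q, biproduct.π B q ≫ biproduct.ι B q) ≫ r ≫ b := by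
          rw [biproduct.total, Category.id_comp, reassoc_of% hsr]
      _ = _ := by simp only [Preadditive.sum_comp, Preadditive.comp_sum, Category.assoc,
          preMap_apply]
  rw [hab]
  exact Submodule.sum_mem _ fun q _ => Submodule.mem_iSup_of_mem q.2.1 <|
    Submodule.mem_iSup_of_mem q.2.2 <| Submodule.mem_iSup_of_mem _ <| LinearMap.mem_range_self _ _

end StandardModule

theorem standard_modules_composition_factors_general
    (𝒜 : Type u) [Category.{v} 𝒜] [Abelian 𝒜]
    (C : Set 𝒜)
    (hext : ∀ S : ShortComplex 𝒜, S.ShortExact → S.X₁ ∈ C → S.X₃ ∈ C → S.X₂ ∈ C)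
    (n : ℕ) (Mi : Fin n → 𝒜) (M : 𝒜) (hM : M ∈ C) (isoM : M ≅ ⨁ Mi)
    (hrigid : ∀ (E : 𝒜), E ∈ C → ∀ (f : M ⟶ E) (g : E ⟶ M) (w : f ≫ g = 0),
      (ShortComplex.mk f g w).ShortExact → ∃ s : M ⟶ E, s ≫ g = 𝟙 M)
    (Mi' : Fin n → 𝒜) (f : ∀ i, Mi i ⟶ Mi' i)
    (htarget : ∀ i, BelowAdd Mi i (Mi' i))
    (happrox : ∀ i (X : 𝒜), BelowAdd Mi i X → ∀ g : Mi i ⟶ X, ∃ h : Mi' i ⟶ X, f i ≫ h = g)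
    (hsurj : ∀ i, Epi (f i)) :
    ∀ i : Fin n,
      -- all composition factors of Δᵢ are among the S_r with r ≥ i :
      (∀ N' N : Submodule (End M) (kernel (f i) ⟶ M), N' ≤ N →
        IsSimpleModule (End M) (N ⧸ Submodule.comap N.subtype N') →
        ∃ r : Fin n, i ≤ r ∧ ∃ ψ : ((Mi r ⟶ M) →ₗ[End M]
            (N ⧸ Submodule.comap N.subtype N')), ψ ≠ 0) ∧
      -- Δᵢ is the largest such quotient of Hom_C(Mᵢ, M) : the kernel of the natural
      -- surjection Hom_C(Mᵢ, M) → Δᵢ is the trace of the projectives with index < i :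
      LinearMap.ker (preMap (M := M) (kernel.ι (f i))) =
        ⨆ (j : Fin n) (_ : j < i) (φ : (Mi j ⟶ M) →ₗ[End M] (Mi i ⟶ M)),
          LinearMap.range φ := by
  intro i
  have := hsurj i
  let R := retractOfIsoBiproduct Mi isoM
  have hι : ∀ j < i, ∀ g : Mi i ⟶ Mi j, kernel.ι (f i) ≫ g = 0 := fun j hj g => by
    obtain ⟨h, rfl⟩ := happrox i _ (belowAdd_of_lt Mi hj) g
    simp
  have hextend : ∀ g : kernel (f i) ⟶ M, ∃ G : Mi i ⟶ M, kernel.ι (f i) ≫ G = g :=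
    exists_extension_of_shortExact
      (.mk' (ShortComplex.kernelSequence_exact (f i)) inferInstance ‹_›)
      fun _ _ _ _ hS => (htarget i).liftsAlong
        (fun j => (liftsAlong_of_shortExact C hM hext hrigid hS).of_retract (R j)) (𝟙 _)
  refine ⟨fun N' N _ _ => ?_, le_antisymm (fun φ hφ => ?_) ?_⟩
  · have := IsSimpleModule.nontrivial (End M) (N ⧸ Submodule.comap N.subtype N')
    obtain ⟨t, ht⟩ := exists_ne (0 : N ⧸ Submodule.comap N.subtype N')
    obtain ⟨r, ψ, hψ⟩ := exists_linearMap_ne_zero isoM ht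
    refine ⟨r, not_lt.1 fun hr => hψ ?_, ψ, hψ⟩
    have := projective_hom_of_retract (R r)
    exact Module.Projective.linearMap_subquotient_eq_zero
      (linearMap_eq_zero_of_comp_eq_zero hextend (hι r hr) (R r)) ψ
  · rw [← Abelian.comp_epiDesc (f i) φ hφ]
    exact (htarget i).comp_mem_iSup_range _ _
  · exact iSup_le fun j => iSup_le fun hj => iSup_le fun φ =>
      range_le_ker_preMap (hι j hj) (R j) φ

theorem standard_modules_composition_factors
    (k : Type v) [Field k] (𝒜 : Type u) [Category.{v} 𝒜] [Abelian 𝒜]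
    [CategoryTheory.Linear k 𝒜]
    (C : Set 𝒜)
    (hfin : ∀ X Y : 𝒜, X ∈ C → Y ∈ C → FiniteDimensional k (X ⟶ Y))
    (hext : ∀ S : ShortComplex 𝒜, S.ShortExact → S.X₁ ∈ C → S.X₃ ∈ C → S.X₂ ∈ C)
    (n : ℕ) (Mi : Fin n → 𝒜) (M : 𝒜) (hM : M ∈ C) (isoM : M ≅ ⨁ Mi)
    (hind : ∀ i, Indecomposable (Mi i))
    (hpair : ∀ i j, i ≠ j → IsEmpty (Mi i ≅ Mi j))
    (hrigid : ∀ (E : 𝒜), E ∈ C → ∀ (f : M ⟶ E) (g : E ⟶ M) (w : f ≫ g = 0),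
      (ShortComplex.mk f g w).ShortExact → ∃ s : M ⟶ E, s ≫ g = 𝟙 M)
    (Mi' : Fin n → 𝒜) (f : ∀ i, Mi i ⟶ Mi' i)
    (htarget : ∀ i, BelowAdd Mi i (Mi' i))
    (happrox : ∀ i (X : 𝒜), BelowAdd Mi i X → ∀ g : Mi i ⟶ X, ∃ h : Mi' i ⟶ X, f i ≫ h = g)
    (hmin : ∀ i (g : Mi' i ⟶ Mi' i), f i ≫ g = f i → IsIso g)
    (hsurj : ∀ i, Epi (f i)) :
    ∀ i : Fin n,
      -- all composition factors of Δᵢ are among the S_r with r ≥ i :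
      (∀ N' N : Submodule (End M) (kernel (f i) ⟶ M), N' ≤ N →
        IsSimpleModule (End M) (N ⧸ Submodule.comap N.subtype N') →
        ∃ r : Fin n, i ≤ r ∧ ∃ ψ : ((Mi r ⟶ M) →ₗ[End M]
            (N ⧸ Submodule.comap N.subtype N')), ψ ≠ 0) ∧
      -- Δᵢ is the largest such quotient of Hom_C(Mᵢ, M) : the kernel of the natural
      -- surjection Hom_C(Mᵢ, M) → Δᵢ is the trace of the projectives with index < i :
      LinearMap.ker (preMap (M := M) (kernel.ι (f i))) =
        ⨆ (j : Fin n) (_ : j < i) (φ : (Mi j ⟶ M) →ₗ[End M] (Mi i ⟶ M)),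
          LinearMap.range φ :=
  standard_modules_composition_factors_general 𝒜 C hext n Mi M hM isoM hrigid Mi' f htarget happrox
    hsurj
end

section
/- In the setting of the strongly quasihereditary theorem above, if additionally each approximation target Mᵢ' is indecomposable or zero, then each indecomposable projective Γ-module Hom_C(Mᵢ, M) has a unique Δ-composition series (Γ is Δ-serial). -/
open CategoryTheory CategoryTheory.Limits

attribute [local instance] CategoryTheory.Limits.HasFiniteBiproducts.of_hasFiniteProducts
attribute [local instance] CategoryTheory.Limits.hasBinaryBiproducts_of_finite_biproducts

/-!
STATEMENT 6. In the setting of the strongly quasihereditary theorem (Statement 5),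
if additionally each approximation target Mᵢ' is indecomposable or zero, then each
indecomposable projective Γ-module Hom_C(Mᵢ, M) has a unique Δ-composition series
(Γ is Δ-serial).  Uniqueness is expressed as: any two Δ-filtrations of Hom_C(Mᵢ, M)
consist of the same chain of submodules.
-/

universe v u

def pdLE (R : Type v) [Ring R] : ℕ → ModuleCat.{v} R → Prop
  | 0, D => Module.Projective R D
  | n + 1, D => ∃ (P : ModuleCat.{v} R) (p : P →ₗ[R] D), Module.Projective R P ∧
      Function.Surjective p ∧ pdLE R n (ModuleCat.of R (LinearMap.ker p))

/-- `c` is a `Δ`-composition series of the module `X`. -/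
def IsDeltaFiltration {R : Type v} [Ring R] {n : ℕ} (Δ : Fin n → ModuleCat.{v} R)
    {X : ModuleCat.{v} R} {m : ℕ} (c : Fin (m + 1) → Submodule R X) : Prop :=
  Monotone c ∧ c 0 = ⊥ ∧ c (Fin.last m) = ⊤ ∧
    ∀ l : Fin m, ∃ j : Fin n,
      Nonempty ((↥(c l.succ) ⧸ Submodule.comap (c l.succ).subtype (c l.castSucc)) ≃ₗ[R] Δ j)

/-!
Write `Γ = End M`, `Pᵢ = Hom(Mᵢ, M)` and `Tᵢ ⊆ Pᵢ` for the image of `Hom(Mᵢ', M)` under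
precomposition with `fᵢ`. Rigidity of `M` in the extension-closed class `C` makes restriction
`Pᵢ → Δᵢ` surjective, with kernel `Tᵢ`. Since `End Mⱼ` is local, every surjection `Pᵢ → Δⱼ`
comes from an isomorphism `Mⱼ ≅ Mᵢ`; hence `j = i` and its kernel is `Tᵢ`. So every
`Δ`-filtration of `Pᵢ` has top quotient `Δᵢ` and penultimate term `Tᵢ ≅ Hom(Mᵢ', M)`, where
`Mᵢ'` is zero or, as an indecomposable summand of `add {Mₗ | l < i}`, isomorphic to some `Mₗ`
with `l < i`. Induction on `i` finishes the proof.
-/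

open Filter in
theorem isNilpotent_or_isUnit_of_isIdempotentElem {R : Type*} [Ring R] [IsArtinianRing R]
    [IsNoetherianRing R] (h : ∀ e : R, IsIdempotentElem e → e = 0 ∨ e = 1) (a : R) :
    IsNilpotent a ∨ IsUnit a := by
  set f := LinearMap.toSpanSingleton R R a
  have hf : ∀ n x, (f ^ n) x = x * a ^ n := by
    intro n
    induction n with
    | zero => simp
    | succ n ih =>
      intro x
      rw [pow_succ', Module.End.mul_apply, ih, pow_succ, ← mul_assoc]
      rfl
  obtain ⟨n, hfit, hn⟩ :=
    (f.eventually_isCompl_ker_pow_range_pow.and (eventually_gt_atTop 0)).exists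
  obtain ⟨e, he, g, ⟨y, rfl⟩, hsum⟩ :=
    Submodule.mem_sup.mp (hfit.codisjoint.eq_top ▸ Submodule.mem_top : (1 : R) ∈ _)
  rw [LinearMap.mem_ker, hf] at he
  rw [hf] at hsum
  have hidem : IsIdempotentElem e := by
    have hker : e - e * e ∈ LinearMap.ker (f ^ n) := by
      rw [LinearMap.mem_ker, hf, sub_mul, mul_assoc, he, mul_zero, sub_zero]
    have hrange : e - e * e ∈ LinearMap.range (f ^ n) :=
      ⟨e * y, by rw [hf, mul_assoc, eq_sub_of_add_eq' hsum, mul_sub, mul_one]⟩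
    exact (sub_eq_zero.mp (hfit.disjoint.eq_bot ▸ ⟨hker, hrange⟩ :
      e - e * e ∈ (⊥ : Submodule R R))).symm
  rcases h e hidem with rfl | rfl
  · rw [zero_add, ← mul_eq_one_comm] at hsum
    exact Or.inr <| (isUnit_pow_iff hn.ne').mp (IsUnit.of_mul_eq_one _ hsum)
  · exact Or.inl ⟨n, by simpa using he⟩

theorem isLocalRing_of_isIdempotentElem {R : Type*} [Ring R] [Nontrivial R] [IsArtinianRing R]
    [IsNoetherianRing R] (h : ∀ e : R, IsIdempotentElem e → e = 0 ∨ e = 1) : IsLocalRing R :=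
  .of_isUnit_or_isUnit_one_sub_self fun a =>
    (isNilpotent_or_isUnit_of_isIdempotentElem h a).symm.imp_right IsNilpotent.isUnit_one_sub

section DeltaFiltration

variable {R : Type v} [Ring R] {n : ℕ} (Δ : Fin n → ModuleCat.{v} R)

def HasUniqueDeltaFiltration (X : ModuleCat.{v} R) : Prop :=
  ∀ (m m' : ℕ) (c : Fin (m + 1) → Submodule R X) (c' : Fin (m' + 1) → Submodule R X),
    IsDeltaFiltration Δ c → IsDeltaFiltration Δ c' → m = m' ∧ Set.range c = Set.range c'

variable {Δ}

theorem IsDeltaFiltration.exists_surjective_top {X : ModuleCat.{v} R} {m : ℕ}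
    {c : Fin (m + 1 + 1) → Submodule R X} (hc : IsDeltaFiltration Δ c) :
    ∃ (j : Fin n) (θ : X →ₗ[R] Δ j), Function.Surjective θ ∧
      LinearMap.ker θ = c (Fin.last m).castSucc := by
  obtain ⟨j, ⟨E⟩⟩ := hc.2.2.2 (Fin.last m)
  have htop : c (Fin.last m).succ = ⊤ := hc.2.2.1
  let L : X →ₗ[R] ↥(c (Fin.last m).succ) :=
    LinearMap.codRestrict _ LinearMap.id fun x => htop ▸ Submodule.mem_top
  refine ⟨j, E.toLinearMap ∘ₗ Submodule.mkQ _ ∘ₗ L,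
    E.surjective.comp ((Submodule.mkQ_surjective _).comp fun y => ⟨y, rfl⟩), ?_⟩
  ext x
  simp [L, Submodule.Quotient.mk_eq_zero]

theorem IsDeltaFiltration.length_eq_zero [∀ j, Nontrivial (Δ j)] {X : ModuleCat.{v} R}
    [Subsingleton X] {m : ℕ} {c : Fin (m + 1) → Submodule R X} (hc : IsDeltaFiltration Δ c) :
    m = 0 := by
  obtain _ | m := m
  · rfl
  obtain ⟨j, ⟨E⟩⟩ := hc.2.2.2 0
  exact (not_subsingleton (Δ j) E.surjective.subsingleton).elim

theorem hasUniqueDeltaFiltration_of_subsingleton [∀ j, Nontrivial (Δ j)] (X : ModuleCat.{v} R)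
    [Subsingleton X] : HasUniqueDeltaFiltration Δ X := by
  intro m m' c c' hc hc'
  refine ⟨hc.length_eq_zero.trans hc'.length_eq_zero.symm, ?_⟩
  ext S
  constructor <;> rintro ⟨k, rfl⟩ <;> exact ⟨0, Subsingleton.elim _ _⟩

noncomputable def Submodule.comapSubquotientEquiv {X Y : Type*} [AddCommGroup X] [Module R X]
    [AddCommGroup Y] [Module R Y] (g : Y →ₗ[R] X) (hg : Function.Injective g)
    (A : Submodule R X) {B : Submodule R X} (hB : B ≤ LinearMap.range g) :
    (↥(B.comap g) ⧸ (A.comap g).comap (B.comap g).subtype) ≃ₗ[R] ↥B ⧸ A.comap B.subtype :=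
  Submodule.Quotient.equiv _ _
    ((Submodule.equivMapOfInjective g hg _).trans
      (LinearEquiv.ofEq _ _ (Submodule.map_comap_eq_of_le hB))) (by
    ext ⟨x, hx⟩
    obtain ⟨y, rfl⟩ := hB hx
    simp)

theorem IsDeltaFiltration.comap {X Y : ModuleCat.{v} R} {m : ℕ}
    {c : Fin (m + 1 + 1) → Submodule R X} (hc : IsDeltaFiltration Δ c) (g : Y →ₗ[R] X)
    (hg : Function.Injective g) (hrange : LinearMap.range g = c (Fin.last m).castSucc) :
    IsDeltaFiltration Δ (fun t : Fin (m + 1) => (c t.castSucc).comap g) := by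
  have hle : ∀ t : Fin (m + 1), c t.castSucc ≤ LinearMap.range g := fun t =>
    hrange ▸ hc.1 (Fin.castSucc_le_castSucc_iff.mpr (Fin.le_last t))
  refine ⟨fun a b hab => Submodule.comap_mono (hc.1 (Fin.castSucc_le_castSucc_iff.mpr hab)), ?_,
    ?_, fun l => ?_⟩
  · simp only [Fin.castSucc_zero, hc.2.1, Submodule.comap_bot, LinearMap.ker_eq_bot.mpr hg]
  · show (c (Fin.last m).castSucc).comap g = ⊤
    rw [← hrange]
    exact eq_top_iff.mpr fun y _ => LinearMap.mem_range_self g y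
  · obtain ⟨j, ⟨E⟩⟩ := hc.2.2.2 l.castSucc
    rw [Fin.succ_castSucc] at E
    exact ⟨j, ⟨(Submodule.comapSubquotientEquiv g hg _ (hle l.succ)).trans E⟩⟩

theorem HasUniqueDeltaFiltration.of_injective [∀ j, Nontrivial (Δ j)] {X Y : ModuleCat.{v} R}
    (g : Y →ₗ[R] X) (hg : Function.Injective g)
    (htop : ∀ j (θ : X →ₗ[R] Δ j), Function.Surjective θ → LinearMap.ker θ = LinearMap.range g)
    (hY : HasUniqueDeltaFiltration Δ Y) : HasUniqueDeltaFiltration Δ X := by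
  by_cases hX : Subsingleton X
  · exact hasUniqueDeltaFiltration_of_subsingleton X
  have hpos : ∀ {m} {c : Fin (m + 1) → Submodule R X}, IsDeltaFiltration Δ c →
      ∃ k, m = k + 1 := by
    rintro (_ | k) c hc
    · exact (hX ((Submodule.subsingleton_iff R).mp
        (subsingleton_iff_bot_eq_top.mp (hc.2.1.symm.trans hc.2.2.1)))).elim
    · exact ⟨k, rfl⟩
  have hpen : ∀ {m} {c : Fin (m + 1 + 1) → Submodule R X}, IsDeltaFiltration Δ c →
      LinearMap.range g = c (Fin.last m).castSucc := fun hc => by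
    obtain ⟨j, θ, hθ, hker⟩ := hc.exists_surjective_top
    rw [← hker, htop j θ hθ]
  have hrange : ∀ {m} {c : Fin (m + 1 + 1) → Submodule R X}, IsDeltaFiltration Δ c →
      Set.range c =
        insert ⊤ (Submodule.map g '' Set.range fun t : Fin (m + 1) => (c t.castSucc).comap g) := by
    intro m c hc
    rw [← Fin.snoc_init_self c, Fin.range_snoc, Fin.snoc_init_self, hc.2.2.1, ← Set.range_comp]
    refine congrArg (insert ⊤) (congrArg Set.range (funext fun t => ?_))
    refine (Submodule.map_comap_eq_of_le ?_).symm
    rw [hpen hc]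
    exact hc.1 (Fin.castSucc_le_castSucc_iff.mpr (Fin.le_last t))
  intro m m' c c' hc hc'
  obtain ⟨m, rfl⟩ := hpos hc
  obtain ⟨m', rfl⟩ := hpos hc'
  obtain ⟨rfl, h⟩ := hY _ _ _ _ (hc.comap g hg (hpen hc)) (hc'.comap g hg (hpen hc'))
  exact ⟨rfl, by rw [hrange hc, hrange hc', h]⟩

end DeltaFiltration

namespace CategoryTheory

section LocalEnd

variable {C : Type u} [Category.{v} C] [Preadditive C] [IsIdempotentComplete C]
  [HasBinaryBiproducts C]

theorem Indecomposable.eq_zero_or_eq_id_of_idem {X : C} (hX : Indecomposable X) {e : X ⟶ X}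
    (he : e ≫ e = e) : e = 0 ∨ e = 𝟙 X := by
  obtain ⟨Y, i, p, hip, hpi⟩ := IsIdempotentComplete.idempotents_split X e he
  obtain ⟨Z, i', p', hip', hpi'⟩ :=
    IsIdempotentComplete.idempotents_split X (𝟙 X - e) (Idempotents.idem_of_id_sub_idem e he)
  have hee' : e ≫ (𝟙 X - e) = 0 := by simp [Preadditive.comp_sub, he]
  have he'e : (𝟙 X - e) ≫ e = 0 := by simp [Preadditive.sub_comp, he]
  have h₁ : i ≫ p' = 0 := by
    calc i ≫ p' = (i ≫ p) ≫ (i ≫ p') ≫ (i' ≫ p') := by rw [hip, hip']; simp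
      _ = i ≫ (p ≫ i) ≫ (p' ≫ i') ≫ p' := by simp only [Category.assoc]
      _ = 0 := by rw [hpi, hpi', reassoc_of% hee']; simp
  have h₂ : i' ≫ p = 0 := by
    calc i' ≫ p = (i' ≫ p') ≫ (i' ≫ p) ≫ (i ≫ p) := by rw [hip, hip']; simp
      _ = i' ≫ (p' ≫ i') ≫ (p ≫ i) ≫ p := by simp only [Category.assoc]
      _ = 0 := by rw [hpi, hpi', reassoc_of% he'e]; simp
  let iso : X ≅ Y ⊞ Z :=
    { hom := biprod.lift p p'
      inv := biprod.desc i i'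
      hom_inv_id := by simp [hpi, hpi']
      inv_hom_id := by ext <;> simp [hip, hip', h₁, h₂] }
  refine (hX.2 Y Z iso).imp (fun hY => ?_) (fun hZ => ?_)
  · rw [← hpi, hY.eq_of_src i 0, comp_zero]
  · rw [← sub_eq_zero, ← neg_sub, ← hpi', hZ.eq_of_src i' 0, comp_zero, neg_zero]

theorem Indecomposable.isIso_of_comp_eq_id {X Y : C} (hY : Indecomposable Y) (hX : ¬IsZero X)
    {a : X ⟶ Y} {b : Y ⟶ X} (hab : a ≫ b = 𝟙 X) : IsIso a := by
  have hidem : (b ≫ a) ≫ (b ≫ a) = b ≫ a := by simp [reassoc_of% hab]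
  refine ⟨b, hab, (hY.eq_zero_or_eq_id_of_idem hidem).resolve_left fun hba => hX ?_⟩
  rw [IsZero.iff_id_eq_zero]
  calc 𝟙 X = a ≫ (b ≫ a) ≫ b := by simp [hab]
    _ = 0 := by rw [hba]; simp

theorem Indecomposable.isLocalRing_end (k : Type*) [Field k] [Linear k C] {X : C}
    (hX : Indecomposable X) [FiniteDimensional k (X ⟶ X)] : IsLocalRing (End X) :=
  have : Nontrivial (End X) :=
    nontrivial_of_ne 1 0 fun h => hX.1 ((IsZero.iff_id_eq_zero X).mpr h)
  have : Module.Finite k (End X) := inferInstanceAs (Module.Finite k (X ⟶ X))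
  have := IsArtinianRing.of_finite k (End X)
  have := IsNoetherianRing.of_finite k (End X)
  isLocalRing_of_isIdempotentElem fun _ he => hX.eq_zero_or_eq_id_of_idem he

theorem exists_iso_of_retract_biproduct {J : Type} [Fintype J] {F : J → C} [HasBiproduct F]
    (hF : ∀ q, Indecomposable (F q)) {N : C} [IsLocalRing (End N)] (h : Retract N (⨁ F)) :
    ∃ q, Nonempty (F q ≅ N) := by
  have hsum : (1 : End N) = ∑ q, (h.i ≫ biproduct.π F q ≫ biproduct.ι F q ≫ h.r : End N) := by
    calc (1 : End N) = h.i ≫ 𝟙 (⨁ F) ≫ h.r := by simp [End.one_def]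
      _ = _ := by
        rw [← biproduct.total, Preadditive.sum_comp, Preadditive.comp_sum]
        simp only [Category.assoc]
  obtain ⟨q, -, hq⟩ := IsLocalRing.exists_of_isUnit_sum (hsum ▸ isUnit_one)
  have : IsIso (h.i ≫ biproduct.π F q ≫ biproduct.ι F q ≫ h.r) := (isUnit_iff_isIso _).mp hq
  have hN : ¬IsZero N := fun hz => one_ne_zero (α := End N) (hz.eq_of_src _ _)
  have := (hF q).isIso_of_comp_eq_id hN (a := h.i ≫ biproduct.π F q)
    (b := biproduct.ι F q ≫ h.r ≫ inv (h.i ≫ biproduct.π F q ≫ biproduct.ι F q ≫ h.r))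
    (by simpa only [Category.assoc] using
      IsIso.hom_inv_id (h.i ≫ biproduct.π F q ≫ biproduct.ι F q ≫ h.r))
  exact ⟨q, ⟨(asIso (h.i ≫ biproduct.π F q)).symm⟩⟩

end LocalEnd

section FiniteDimensional

variable (k : Type*) [Field k] {C : Type u} [Category.{v} C] [Preadditive C] [Linear k C]

theorem Retract.finiteDimensional_hom {X X' Y Y' : C} (hX : Retract X X') (hY : Retract Y Y')
    [FiniteDimensional k (X' ⟶ Y')] : FiniteDimensional k (X ⟶ Y) :=
  FiniteDimensional.of_injective ((Linear.leftComp k Y' hX.r).comp (Linear.rightComp k X hY.i))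
    fun φ ψ h => by simpa using congrArg (fun χ => hX.i ≫ χ ≫ hY.r) h

instance finiteDimensional_hom_biproduct {J : Type} [Finite J] {F G : J → C} [HasBiproduct F]
    [HasBiproduct G] [∀ a b, FiniteDimensional k (F a ⟶ G b)] :
    FiniteDimensional k (⨁ F ⟶ ⨁ G) :=
  FiniteDimensional.of_injective (LinearMap.pi fun a => LinearMap.pi fun b =>
      (Linear.leftComp k (G b) (biproduct.ι F a)).comp (Linear.rightComp k (⨁ F) (biproduct.π G b)))
    fun φ ψ h => biproduct.hom_ext' _ _ fun a => biproduct.hom_ext _ _ fun b => by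
      simpa using congrFun (congrFun h a) b

end FiniteDimensional

section Extensions

variable {C : Type u} [Category.{v} C] [Abelian C]

theorem ShortComplex.ShortExact.pullback_lift_snd {S : ShortComplex C} (hS : S.ShortExact)
    {Y : C} (u : Y ⟶ S.X₃) :
    (ShortComplex.mk (pullback.lift S.f 0 (by rw [S.zero, zero_comp])) (pullback.snd S.g u)
      (pullback.lift_snd _ _ _)).ShortExact := by
  have := hS.mono_f
  have := hS.epi_g
  refine .mk' ?_ (mono_of_mono_fac (pullback.lift_fst _ _ _)) inferInstance
  rw [ShortComplex.exact_iff_exact_up_to_refinements]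
  intro A (x₂ : A ⟶ pullback S.g u) (hx₂ : x₂ ≫ pullback.snd S.g u = 0)
  obtain ⟨A', π, hπ, x₁, fac⟩ := hS.exact.exact_up_to_refinements (x₂ ≫ pullback.fst _ _)
    (by simp only [Category.assoc, pullback.condition, reassoc_of% hx₂, zero_comp])
  refine ⟨A', π, hπ, x₁, pullback.hom_ext ?_ ?_⟩ <;> dsimp only <;>
    simp only [Category.assoc, pullback.lift_fst, pullback.lift_snd, fac, hx₂, comp_zero]

theorem ShortComplex.ShortExact.pushout_inr_desc {S : ShortComplex C} (hS : S.ShortExact)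
    {Y : C} (ψ : S.X₁ ⟶ Y) :
    (ShortComplex.mk (pushout.inr S.f ψ) (pushout.desc S.g 0 (by rw [S.zero, comp_zero]))
      (pushout.inr_desc _ _ _)).ShortExact := by
  have := hS.mono_f
  have := hS.epi_g
  have hg : Epi (pushout.desc S.g (0 : Y ⟶ S.X₃) (by rw [S.zero, comp_zero]) :
      pushout S.f ψ ⟶ S.X₃) :=
    epi_of_epi_fac (pushout.inl_desc _ _ _)
  refine .mk' ?_ inferInstance hg
  refine ShortComplex.exact_of_g_is_cokernel _ <|
    CokernelCofork.IsColimit.ofπ' _ _ fun {W} t (ht : pushout.inr S.f ψ ≫ t = 0) => ?_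
  obtain ⟨t', ht' : S.g ≫ t' = _⟩ :=
    CokernelCofork.IsColimit.desc' hS.gIsCokernel (pushout.inl S.f ψ ≫ t)
      (by rw [← Category.assoc, pushout.condition, Category.assoc, ht, comp_zero])
  refine ⟨t', pushout.hom_ext ?_ ?_⟩ <;> dsimp only <;>
    simp only [pushout.inl_desc_assoc, pushout.inr_desc_assoc, ht', ht, zero_comp]

def IsExtensionClosed (𝒳 : Set C) : Prop :=
  ∀ S : ShortComplex C, S.ShortExact → S.X₁ ∈ 𝒳 → S.X₃ ∈ 𝒳 → S.X₂ ∈ 𝒳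

/-- `Ext¹(M, M) = 0`, computed inside `𝒳`. -/
def IsRigidIn (𝒳 : Set C) (M : C) : Prop :=
  ∀ (E : C), E ∈ 𝒳 → ∀ (f : M ⟶ E) (g : E ⟶ M) (w : f ≫ g = 0),
    (ShortComplex.mk f g w).ShortExact → ∃ s : M ⟶ E, s ≫ g = 𝟙 M

variable {𝒳 : Set C} {M : C}

theorem IsRigidIn.exists_lift (h𝒳 : IsExtensionClosed 𝒳) (hM : M ∈ 𝒳) (hrig : IsRigidIn 𝒳 M)
    {E N : C} {a : M ⟶ E} {b : E ⟶ N} {w : a ≫ b = 0} (hS : (ShortComplex.mk a b w).ShortExact)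
    (u : M ⟶ N) : ∃ t : M ⟶ E, t ≫ b = u := by
  have hP := hS.pullback_lift_snd u
  obtain ⟨s, hs : s ≫ pullback.snd b u = 𝟙 M⟩ := hrig _ (h𝒳 _ hP hM hM) _ _ _ hP
  exact ⟨s ≫ pullback.fst b u, by rw [Category.assoc, pullback.condition, reassoc_of% hs]⟩

theorem IsRigidIn.exists_section (h𝒳 : IsExtensionClosed 𝒳) (hM : M ∈ 𝒳) (hrig : IsRigidIn 𝒳 M)
    {E N : C} {a : M ⟶ E} {b : E ⟶ N} {w : a ≫ b = 0} (hS : (ShortComplex.mk a b w).ShortExact)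
    {J : Type} [Finite J] (h : Retract N (⨁ fun _ : J => M)) : ∃ s : N ⟶ E, s ≫ b = 𝟙 N := by
  choose t ht using fun q => hrig.exists_lift h𝒳 hM hS (biproduct.ι (fun _ : J => M) q ≫ h.r)
  have : biproduct.desc t ≫ b = h.r := biproduct.hom_ext' _ _ fun q => by simp [ht]
  exact ⟨h.i ≫ biproduct.desc t, by rw [Category.assoc, this, h.retract]⟩

theorem IsRigidIn.exists_extension (h𝒳 : IsExtensionClosed 𝒳) (hM : M ∈ 𝒳)
    (hrig : IsRigidIn 𝒳 M) {S : ShortComplex C} (hS : S.ShortExact) {J : Type} [Finite J]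
    (h : Retract S.X₃ (⨁ fun _ : J => M)) (ψ : S.X₁ ⟶ M) : ∃ Φ : S.X₂ ⟶ M, S.f ≫ Φ = ψ := by
  have hE := hS.pushout_inr_desc ψ
  obtain ⟨s, hs⟩ := hrig.exists_section h𝒳 hM hE h
  let σ := ShortComplex.Splitting.ofExactOfSection _ hE.exact s hs hE.mono_f
  refine ⟨pushout.inl S.f ψ ≫ σ.r, ?_⟩
  rw [← Category.assoc, pushout.condition, Category.assoc,
    show pushout.inr S.f ψ ≫ σ.r = 𝟙 M from σ.f_r, Category.comp_id]

end Extensions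

section HomModule

variable {C : Type u} [Category.{v} C] [Abelian C] {M : C}

theorem homEndModule_smul {A : C} (γ : End M) (φ : A ⟶ M) : γ • φ = φ ≫ γ := rfl

variable (M) in
noncomputable def homPrecomp {A B : C} (d : B ⟶ A) : (A ⟶ M) →ₗ[End M] (B ⟶ M) where
  toFun φ := d ≫ φ
  map_add' := Preadditive.comp_add _ _ _ _
  map_smul' _ _ := (Category.assoc _ _ _).symm

@[simp]
theorem homPrecomp_apply {A B : C} (d : B ⟶ A) (φ : A ⟶ M) : homPrecomp M d φ = d ≫ φ := rfl

theorem homPrecomp_injective {A B : C} (d : B ⟶ A) [Epi d] :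
    Function.Injective (homPrecomp M d) :=
  fun _ _ h => (cancel_epi d).mp h

theorem ker_homPrecomp_kernel_ι {B B' : C} (f : B ⟶ B') [Epi f] :
    LinearMap.ker (homPrecomp M (kernel.ι f)) = LinearMap.range (homPrecomp M f) := by
  ext φ
  refine ⟨fun (hφ : kernel.ι f ≫ φ = 0) =>
    ⟨Abelian.epiDesc f φ hφ, Abelian.comp_epiDesc f φ hφ⟩, ?_⟩
  rintro ⟨h, rfl⟩
  simp

theorem Retract.map_eq_smul {A : C} (h : Retract A M) {V : Type*} [AddCommGroup V]
    [Module (End M) V] (L : (A ⟶ M) →ₗ[End M] V) (φ : A ⟶ M) :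
    L φ = End.of (h.r ≫ φ) • L h.i := by
  rw [← map_smul, homEndModule_smul, h.retract_assoc]

theorem Retract.eq_top_of_isIso {A : C} (h : Retract A M) {N : Submodule (End M) (A ⟶ M)}
    {x : A ⟶ M} (hx : x ∈ N) [IsIso (x ≫ h.r)] : N = ⊤ :=
  eq_top_iff.mpr fun φ _ => by
    have hφ : x ≫ h.r ≫ inv (x ≫ h.r) ≫ φ = φ := by
      rw [← Category.assoc, IsIso.hom_inv_id_assoc]
    exact hφ ▸ N.smul_mem (End.of (h.r ≫ inv (x ≫ h.r) ≫ φ)) hx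

theorem Retract.eq_top_or_eq_top_of_sup_eq_top {A : C} [IsLocalRing (End A)] (h : Retract A M)
    {N₁ N₂ : Submodule (End M) (A ⟶ M)} (hsup : N₁ ⊔ N₂ = ⊤) : N₁ = ⊤ ∨ N₂ = ⊤ := by
  obtain ⟨x₁, hx₁, x₂, hx₂, hsum⟩ :=
    Submodule.mem_sup.mp (hsup ▸ Submodule.mem_top : h.i ∈ N₁ ⊔ N₂)
  have hone : End.of (x₁ ≫ h.r) + End.of (x₂ ≫ h.r) = 1 := by
    rw [← Preadditive.add_comp, hsum, h.retract]
    rfl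
  refine (IsLocalRing.isUnit_or_isUnit_of_add_one hone).imp (fun hu => ?_) (fun hu => ?_)
  · have := (isUnit_iff_isIso _).mp hu
    exact h.eq_top_of_isIso hx₁
  · have := (isUnit_iff_isIso _).mp hu
    exact h.eq_top_of_isIso hx₂

theorem Retract.kernel_ι_comp_ne_zero {B B' : C} (hB : Retract B M) (f : B ⟶ B') [Epi f]
    (hf : ¬IsIso f) : kernel.ι f ≫ hB.i ≠ 0 := fun h => by
  have := Abelian.mono_of_kernel_ι_eq_zero f (zero_of_comp_mono hB.i h)
  exact hf (isIso_of_mono_of_epi f)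

theorem range_homPrecomp_ne_top {B B' : C} (hB : Retract B M) (f : B ⟶ B') [Epi f]
    (hf : ¬IsIso f) : LinearMap.range (homPrecomp M f) ≠ ⊤ := fun htop => by
  obtain ⟨g, hg : f ≫ g = hB.i⟩ := htop ▸ Submodule.mem_top (x := hB.i)
  exact hB.kernel_ι_comp_ne_zero f hf (by rw [← hg, kernel.condition_assoc, zero_comp])

theorem exists_iso_of_surjective {A B B' : C} (hA : Retract A M) (hB : Retract B M)
    (hAind : Indecomposable A) [IsLocalRing (End B)] (f : B ⟶ B') [Epi f] (hf : ¬IsIso f)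
    (hext : ∀ ψ : kernel f ⟶ M, ∃ Φ : B ⟶ M, kernel.ι f ≫ Φ = ψ)
    (θ : (A ⟶ M) →ₗ[End M] (kernel f ⟶ M)) (hθ : Function.Surjective θ) :
    ∃ d : B ≅ A, ∀ φ, θ φ = kernel.ι f ≫ d.hom ≫ φ := by
  -- `θ` is precomposition with `θ hA.i ≫ hA.r`, which extends along `kernel.ι f` to `d`. Then
  -- `d^*` and `f^*` jointly cover the local module `Hom(B, M)` and `f^*` does not, so `d^*` is
  -- onto and `d` is a split mono.
  obtain ⟨Φ, hΦ⟩ := hext (θ hA.i ≫ hA.r ≫ hA.i)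
  set d := Φ ≫ hA.r
  have hθd : ∀ φ, θ φ = kernel.ι f ≫ d ≫ φ := fun φ => by
    rw [hA.map_eq_smul θ φ, homEndModule_smul]
    simp only [d, End.of, Category.assoc, reassoc_of% hΦ, hA.retract_assoc]
  have hsup : LinearMap.range (homPrecomp M d) ⊔ LinearMap.range (homPrecomp M f) = ⊤ := by
    refine eq_top_iff.mpr fun y _ => ?_
    obtain ⟨φ, hφ⟩ := hθ (kernel.ι f ≫ y)
    have : y - d ≫ φ ∈ LinearMap.range (homPrecomp M f) := by
      rw [← ker_homPrecomp_kernel_ι, LinearMap.mem_ker, map_sub, homPrecomp_apply,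
        homPrecomp_apply, ← hθd, hφ, sub_self]
    have := Submodule.add_mem_sup (LinearMap.mem_range_self (homPrecomp M d) φ) this
    rwa [homPrecomp_apply, add_sub_cancel] at this
  obtain ⟨φ₀, hφ₀ : d ≫ φ₀ = hB.i⟩ :=
    ((hB.eq_top_or_eq_top_of_sup_eq_top hsup).resolve_right (range_homPrecomp_ne_top hB f hf)) ▸
      Submodule.mem_top (x := hB.i)
  have hB0 : ¬IsZero B := fun hz => one_ne_zero (α := End B) (hz.eq_of_src _ _)
  have := hAind.isIso_of_comp_eq_id hB0 (b := φ₀ ≫ hB.r) (by rw [reassoc_of% hφ₀, hB.retract])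
  exact ⟨asIso d, hθd⟩

theorem ker_eq_range_homPrecomp {A A' : C} (f : A ⟶ A') [Epi f]
    (hf : ∀ g : A ⟶ A', ∃ h : A' ⟶ A', f ≫ h = g) (d : A ≅ A)
    (θ : (A ⟶ M) →ₗ[End M] (kernel f ⟶ M)) (hθ : ∀ φ, θ φ = kernel.ι f ≫ d.hom ≫ φ) :
    LinearMap.ker θ = LinearMap.range (homPrecomp M f) := by
  have hstable : ∀ (e : A ⟶ A) {φ}, φ ∈ LinearMap.range (homPrecomp M f) →
      e ≫ φ ∈ LinearMap.range (homPrecomp M f) := by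
    rintro e _ ⟨h, rfl⟩
    obtain ⟨h', hh'⟩ := hf (e ≫ f)
    exact ⟨h' ≫ h, by simp [reassoc_of% hh']⟩
  have hker : ∀ ψ : A ⟶ M, kernel.ι f ≫ ψ = 0 ↔ ψ ∈ LinearMap.range (homPrecomp M f) :=
    fun ψ => by rw [← ker_homPrecomp_kernel_ι]; rfl
  ext φ
  rw [LinearMap.mem_ker, hθ, hker]
  exact ⟨fun h => by simpa using hstable d.inv h, hstable d.hom⟩

theorem hasUniqueDeltaFiltration_of_isZero_or_iso {n : ℕ} {Δ : Fin n → ModuleCat.{v} (End M)}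
    [∀ j, Nontrivial (Δ j)] {A A' : C} (f : A ⟶ A') [Epi f]
    (htop : ∀ j (θ : (A ⟶ M) →ₗ[End M] Δ j), Function.Surjective θ →
      LinearMap.ker θ = LinearMap.range (homPrecomp M f))
    (hA' : IsZero A' ∨ ∃ B : C, Nonempty (B ≅ A') ∧
      HasUniqueDeltaFiltration Δ (ModuleCat.of (End M) (B ⟶ M))) :
    HasUniqueDeltaFiltration Δ (ModuleCat.of (End M) (A ⟶ M)) := by
  rcases hA' with hz | ⟨B, ⟨e⟩, hB⟩
  · have : Subsingleton (A' ⟶ M) := ⟨hz.eq_of_src⟩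
    exact HasUniqueDeltaFiltration.of_injective (Y := ModuleCat.of (End M) (A' ⟶ M))
      (homPrecomp M f) (homPrecomp_injective f) htop (hasUniqueDeltaFiltration_of_subsingleton _)
  · refine HasUniqueDeltaFiltration.of_injective (X := ModuleCat.of (End M) (A ⟶ M))
      (Y := ModuleCat.of (End M) (B ⟶ M)) (homPrecomp M f ∘ₗ homPrecomp M e.inv)
      ((homPrecomp_injective _).comp (homPrecomp_injective _)) ?_ hB
    rw [LinearMap.range_comp_of_range_eq_top _
      (LinearMap.range_eq_top.mpr fun ψ => ⟨e.hom ≫ ψ, by simp⟩)]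
    exact htop

end HomModule

section BelowAdd

variable {C : Type u} [Category.{v} C] [Abelian C]

noncomputable def Retract.biproductMap {J : Type} {F G : J → C} [HasBiproduct F]
    [HasBiproduct G] (h : ∀ q, Retract (F q) (G q)) : Retract (⨁ F) (⨁ G) where
  i := biproduct.map fun q => (h q).i
  r := biproduct.map fun q => (h q).r
  retract := by ext; simp

variable {n : ℕ} {Mi : Fin n → C} {i : Fin n} {X : C}

theorem BelowAdd.exists_retract (hX : BelowAdd Mi i X) {M : C} (hM : ∀ l, Retract (Mi l) M) :
    ∃ m : ℕ, Nonempty (Retract X (⨁ fun _ : Fin m × {j : Fin n // j < i} => M)) := by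
  obtain ⟨m, s, r, h⟩ := hX
  exact ⟨m, ⟨(⟨s, r, h⟩ : Retract X _).trans (Retract.biproductMap fun q => hM q.2.1)⟩⟩

theorem BelowAdd.isZero_or_exists_iso (k : Type*) [Field k] [Linear k C]
    [∀ a b, FiniteDimensional k (Mi a ⟶ Mi b)] (hind : ∀ l, Indecomposable (Mi l))
    (hX : BelowAdd Mi i X) (hX' : IsZero X ∨ Indecomposable X) :
    IsZero X ∨ ∃ l < i, Nonempty (Mi l ≅ X) := by
  obtain ⟨m, s, r, h⟩ := hX
  refine hX'.imp_right fun hXind => ?_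
  have : FiniteDimensional k (X ⟶ X) :=
    Retract.finiteDimensional_hom k (⟨s, r, h⟩ : Retract X _) ⟨s, r, h⟩
  have := hXind.isLocalRing_end k
  obtain ⟨q, ⟨e⟩⟩ := exists_iso_of_retract_biproduct
    (fun q : Fin m × {j : Fin n // j < i} => hind q.2.1) ⟨s, r, h⟩
  exact ⟨q.2.1, q.2.2, ⟨e⟩⟩

end BelowAdd

end CategoryTheory

theorem endomorphism_algebra_delta_serial_general
    (k : Type v) [Field k] (𝒜 : Type u) [Category.{v} 𝒜] [Abelian 𝒜]
    [CategoryTheory.Linear k 𝒜]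
    (C : Set 𝒜)
    (hfin : ∀ X Y : 𝒜, X ∈ C → Y ∈ C → FiniteDimensional k (X ⟶ Y))
    (hext : ∀ S : ShortComplex 𝒜, S.ShortExact → S.X₁ ∈ C → S.X₃ ∈ C → S.X₂ ∈ C)
    (n : ℕ) (Mi : Fin n → 𝒜) (M : 𝒜) (hM : M ∈ C) (isoM : M ≅ ⨁ Mi)
    (hind : ∀ i, Indecomposable (Mi i))
    (hpair : ∀ i j, i ≠ j → IsEmpty (Mi i ≅ Mi j))
    (hrigid : ∀ (E : 𝒜), E ∈ C → ∀ (f : M ⟶ E) (g : E ⟶ M) (w : f ≫ g = 0),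
      (ShortComplex.mk f g w).ShortExact → ∃ s : M ⟶ E, s ≫ g = 𝟙 M)
    (Mi' : Fin n → 𝒜) (f : ∀ i, Mi i ⟶ Mi' i)
    (htarget : ∀ i, BelowAdd Mi i (Mi' i))
    (happrox : ∀ i (X : 𝒜), BelowAdd Mi i X → ∀ g : Mi i ⟶ X, ∃ h : Mi' i ⟶ X, f i ≫ h = g)
    (hsurj : ∀ i, Epi (f i))
    -- each approximation target Mᵢ' is indecomposable or zero :
    (hindtarget : ∀ i, IsZero (Mi' i) ∨ Indecomposable (Mi' i)) :
    -- Γ is Δ-serial : each indecomposable projective Hom_C(Mᵢ, M) has a unique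
    -- Δ-composition series, where Δⱼ = Hom_C(Ker fⱼ, M) :
    ∀ i : Fin n, ∀ (m m' : ℕ)
      (c : Fin (m + 1) → Submodule (End M) (ModuleCat.of (End M) (Mi i ⟶ M)))
      (c' : Fin (m' + 1) → Submodule (End M) (ModuleCat.of (End M) (Mi i ⟶ M))),
      IsDeltaFiltration (fun j => ModuleCat.of (End M) (kernel (f j) ⟶ M)) c →
      IsDeltaFiltration (fun j => ModuleCat.of (End M) (kernel (f j) ⟶ M)) c' →
      m = m' ∧ Set.range c = Set.range c' := by
  have hret : ∀ l, Retract (Mi l) M := fun l =>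
    ((biproduct.bicone Mi).retract l).trans (Retract.ofIso isoM.symm)
  have : FiniteDimensional k (M ⟶ M) := hfin M M hM hM
  have : ∀ a b, FiniteDimensional k (Mi a ⟶ Mi b) := fun a b =>
    (hret a).finiteDimensional_hom k (hret b)
  have : ∀ l, IsLocalRing (End (Mi l)) := fun l => (hind l).isLocalRing_end k
  have hshape : ∀ l, IsZero (Mi' l) ∨ ∃ l' < l, Nonempty (Mi l' ≅ Mi' l) := fun l =>
    (htarget l).isZero_or_exists_iso k hind (hindtarget l)
  have hnotiso : ∀ l, ¬IsIso (f l) := fun l _ => by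
    rcases hshape l with hz | ⟨l', hl', ⟨e⟩⟩
    · exact (hind l).1 (hz.of_iso (asIso (f l)))
    · exact (hpair l' l hl'.ne).false (e ≪≫ (asIso (f l)).symm)
  have hrestrict : ∀ l (ψ : kernel (f l) ⟶ M), ∃ Φ, kernel.ι (f l) ≫ Φ = ψ := fun l ψ => by
    obtain ⟨m, ⟨h⟩⟩ := (htarget l).exists_retract hret
    exact IsRigidIn.exists_extension hext hM hrigid
      (.mk' (ShortComplex.kernelSequence_exact (f l)) inferInstance (hsurj l)) h ψ
  have htop : ∀ i j (θ : (Mi i ⟶ M) →ₗ[End M] (kernel (f j) ⟶ M)), Function.Surjective θ →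
      LinearMap.ker θ = LinearMap.range (homPrecomp M (f i)) := fun i j θ hθ => by
    obtain ⟨d, hd⟩ := exists_iso_of_surjective (hret i) (hret j) (hind i) (f j) (hnotiso j)
      (hrestrict j) θ hθ
    obtain rfl : j = i := by_contra fun hji => (hpair j i hji).false d
    exact ker_eq_range_homPrecomp (f j) (happrox j _ (htarget j)) d θ hd
  have : ∀ j, Nontrivial (ModuleCat.of (End M) (kernel (f j) ⟶ M)) := fun j =>
    nontrivial_of_ne _ 0 ((hret j).kernel_ι_comp_ne_zero (f j) (hnotiso j))
  intro i
  induction i using WellFoundedLT.induction with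
  | _ i ih =>
    refine hasUniqueDeltaFiltration_of_isZero_or_iso (f i) (htop i) ((hshape i).imp_right ?_)
    rintro ⟨l, hl, he⟩
    exact ⟨Mi l, he, ih l hl⟩

theorem endomorphism_algebra_delta_serial
    (k : Type v) [Field k] (𝒜 : Type u) [Category.{v} 𝒜] [Abelian 𝒜]
    [CategoryTheory.Linear k 𝒜]
    (C : Set 𝒜)
    (hfin : ∀ X Y : 𝒜, X ∈ C → Y ∈ C → FiniteDimensional k (X ⟶ Y))
    (hext : ∀ S : ShortComplex 𝒜, S.ShortExact → S.X₁ ∈ C → S.X₃ ∈ C → S.X₂ ∈ C)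
    (n : ℕ) (Mi : Fin n → 𝒜) (M : 𝒜) (hM : M ∈ C) (isoM : M ≅ ⨁ Mi)
    (hind : ∀ i, Indecomposable (Mi i))
    (hpair : ∀ i j, i ≠ j → IsEmpty (Mi i ≅ Mi j))
    (hrigid : ∀ (E : 𝒜), E ∈ C → ∀ (f : M ⟶ E) (g : E ⟶ M) (w : f ≫ g = 0),
      (ShortComplex.mk f g w).ShortExact → ∃ s : M ⟶ E, s ≫ g = 𝟙 M)
    (Mi' : Fin n → 𝒜) (f : ∀ i, Mi i ⟶ Mi' i)
    (htarget : ∀ i, BelowAdd Mi i (Mi' i))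
    (happrox : ∀ i (X : 𝒜), BelowAdd Mi i X → ∀ g : Mi i ⟶ X, ∃ h : Mi' i ⟶ X, f i ≫ h = g)
    (hmin : ∀ i (g : Mi' i ⟶ Mi' i), f i ≫ g = f i → IsIso g)
    (hsurj : ∀ i, Epi (f i))
    (hgl : ∃ d, ∀ D : ModuleCat.{v} (End M), pdLE (End M) d D)
    -- each approximation target Mᵢ' is indecomposable or zero :
    (hindtarget : ∀ i, IsZero (Mi' i) ∨ Indecomposable (Mi' i)) :
    -- Γ is Δ-serial : each indecomposable projective Hom_C(Mᵢ, M) has a unique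
    -- Δ-composition series, where Δⱼ = Hom_C(Ker fⱼ, M) :
    ∀ i : Fin n, ∀ (m m' : ℕ)
      (c : Fin (m + 1) → Submodule (End M) (ModuleCat.of (End M) (Mi i ⟶ M)))
      (c' : Fin (m' + 1) → Submodule (End M) (ModuleCat.of (End M) (Mi i ⟶ M))),
      IsDeltaFiltration (fun j => ModuleCat.of (End M) (kernel (f j) ⟶ M)) c →
      IsDeltaFiltration (fun j => ModuleCat.of (End M) (kernel (f j) ⟶ M)) c' →
      m = m' ∧ Set.range c = Set.range c' :=
  endomorphism_algebra_delta_serial_general k 𝒜 C hfin hext n Mi M hM isoM hind hpair hrigid Mi' f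
    htarget happrox hsurj hindtarget
end

section
/- Let A be a finite-dimensional algebra with id_A A ≤ 1, M a cluster tilting object in Sub A, Γ = End_A(M), F = Hom_A(–, M) and G = Hom_Γ(–, M). Then for every X ∈ Sub A the natural evaluation map X → G(F(X)) = Hom_Γ(Hom_A(X, M), M) is an isomorphism. -/
/-!
STATEMENT 16. Let A be a finite-dimensional algebra with id_A A ≤ 1, M a cluster tilting
object in Sub A, Γ = End_A(M), F = Hom_A(–, M) and G = Hom_Γ(–, M).  Then for every
X ∈ Sub A, the natural evaluation map X → G(F(X)) = Hom_Γ(Hom_A(X, M), M) is an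
isomorphism.
-/

def Ext1Zero (A : Type) [Ring A] (Z X : Type) [AddCommGroup Z] [Module A Z]
    [AddCommGroup X] [Module A X] : Prop :=
  ∀ (E : Type) [AddCommGroup E] [Module A E] (f : X →ₗ[A] E) (g : E →ₗ[A] Z),
    Function.Injective f → Function.Surjective g → LinearMap.range f = LinearMap.ker g →
    ∃ s : Z →ₗ[A] E, g ∘ₗ s = LinearMap.id

def InSub (A : Type) [Ring A] (X : Type) [AddCommGroup X] [Module A X] : Prop :=
  ∃ (n : ℕ) (f : X →ₗ[A] (Fin n → A)), Function.Injective f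

def InAdd (A : Type) [Ring A] (M X : Type) [AddCommGroup M] [Module A M]
    [AddCommGroup X] [Module A X] : Prop :=
  ∃ (n : ℕ) (s : X →ₗ[A] (Fin n → M)) (r : (Fin n → M) →ₗ[A] X), r ∘ₗ s = LinearMap.id

def IsClusterTilting (A : Type) [Ring A] (M : Type) [AddCommGroup M] [Module A M] : Prop :=
  InSub A M ∧
  ∀ (X : Type) [AddCommGroup X] [Module A X], InSub A X →
    ((Ext1Zero A M X ↔ InAdd A M X) ∧ (Ext1Zero A X M ↔ InAdd A M X))

def InjDimLE1 (A : Type) [Ring A] : Prop :=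
  ∃ (I₀ : ModuleCat.{0} A) (ι : A →ₗ[A] I₀), Module.Injective A I₀ ∧
    Function.Injective ι ∧ Module.Injective A (I₀ ⧸ LinearMap.range ι)

/-- The evaluation map `X → Hom_Γ(Hom_A(X, M), M)`, `x ↦ (φ ↦ φ x)`. -/
def evMap (A : Type) [Ring A] (M : Type) [AddCommGroup M] [Module A M]
    (X : Type) [AddCommGroup X] [Module A X] :
    X →ₗ[A] ((X →ₗ[A] M) →ₗ[Module.End A M] M) where
  toFun x :=
    { toFun := fun φ => φ x
      map_add' := fun _ _ => rfl
      map_smul' := fun _ _ => rfl }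
  map_add' x y := LinearMap.ext fun φ => φ.map_add x y
  map_smul' a x := LinearMap.ext fun φ => φ.map_smul a x

/-!
Choose `ι : X → M^N` through which every map `X → M` factors; it exists because `Hom_A(X, M)` is
finite-dimensional. A `Γ`-linear `α : Hom_A(X, M) → M` is determined by the tuple
`y = (α (proj i ∘ ι))ᵢ`, and `α` is evaluation at `x` as soon as `y = ι x`. So everything
reduces to showing that maps to `M` separate the points of `C = coker ι`.

For this, present the injective cogenerator `D = Hom_k(A, k)` as a quotient `π : A^t → D`.
Maps `M → D` lift along `π` (`M ⊆ A^m`, `D` injective), and `Ext¹(M, A^t) = 0`, so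
`Ext¹(M, ker π) = 0` and cluster tilting puts `ker π` into `add M`. Consequently every map
`C → D` lifts to `A^t`, which is cogenerated by `M`, while maps `C → D` separate points.
-/

def IsCogeneratedBy (A W V : Type) [Ring A] [AddCommGroup W] [Module A W] [AddCommGroup V]
    [Module A V] : Prop :=
  ∀ v : V, (∀ φ : V →ₗ[A] W, φ v = 0) → v = 0

def IsLeftApprox {A X Q : Type} [Ring A] (M : Type) [AddCommGroup X] [Module A X]
    [AddCommGroup Q] [Module A Q] [AddCommGroup M] [Module A M] (ι : X →ₗ[A] Q) : Prop :=
  ∀ φ : X →ₗ[A] M, ∃ Ψ : Q →ₗ[A] M, Ψ ∘ₗ ι = φ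

section Cogeneration

variable {A U V W : Type} [Ring A] [AddCommGroup U] [Module A U] [AddCommGroup V] [Module A V]
  [AddCommGroup W] [Module A W]

lemma IsCogeneratedBy.apply_eq_zero (h : IsCogeneratedBy A W U) {v : V}
    (hv : ∀ φ : V →ₗ[A] W, φ v = 0) (ψ : V →ₗ[A] U) : ψ v = 0 :=
  h _ fun φ => hv (φ ∘ₗ ψ)

lemma IsCogeneratedBy.trans (hWU : IsCogeneratedBy A W U) (hUV : IsCogeneratedBy A U V) :
    IsCogeneratedBy A W V :=
  fun _ hv => hUV _ (hWU.apply_eq_zero hv)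

lemma IsCogeneratedBy.of_injective (j : V →ₗ[A] U) (hj : Function.Injective j) :
    IsCogeneratedBy A U V := fun v hv =>
  hj <| by rw [hv j, map_zero]

lemma isCogeneratedBy_pi (ι : Type) : IsCogeneratedBy A W (ι → W) := fun _ hv =>
  funext fun i => hv (LinearMap.proj i)

lemma InAdd.isCogeneratedBy (h : InAdd A W V) : IsCogeneratedBy A W V := by
  obtain ⟨n, s, r, hrs⟩ := h
  exact (isCogeneratedBy_pi _).trans <|
    .of_injective s (Function.LeftInverse.injective (g := r) (LinearMap.congr_fun hrs))

lemma IsCogeneratedBy.of_forall_lift {C D : Type} [AddCommGroup C] [Module A C]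
    [AddCommGroup D] [Module A D] (hD : IsCogeneratedBy A D C) (hU : IsCogeneratedBy A W U)
    (π : U →ₗ[A] D) (hlift : ∀ G : C →ₗ[A] D, ∃ h : C →ₗ[A] U, π ∘ₗ h = G) :
    IsCogeneratedBy A W C := fun c hc => hD c fun G => by
  obtain ⟨h, rfl⟩ := hlift G
  simp [hU.apply_eq_zero hc h]

end Cogeneration

section Evaluation

variable {A X M : Type} [Ring A] [AddCommGroup X] [Module A X] [AddCommGroup M] [Module A M]

lemma map_comp_eq_apply_pi {N : Type} [Fintype N] [DecidableEq N] (ι : X →ₗ[A] (N → M))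
    (α : (X →ₗ[A] M) →ₗ[Module.End A M] M) (ψ : (N → M) →ₗ[A] M) :
    α (ψ ∘ₗ ι) = ψ fun i => α (LinearMap.proj i ∘ₗ ι) := by
  have hψ : ψ ∘ₗ ι = ∑ i, (ψ ∘ₗ LinearMap.single A (fun _ => M) i) • (LinearMap.proj i ∘ₗ ι) := by
    ext x
    conv_lhs => rw [LinearMap.comp_apply, ← Finset.univ_sum_single (ι x), map_sum]
    simp
  rw [hψ, map_sum, ← Finset.univ_sum_single fun i => α (LinearMap.proj i ∘ₗ ι), map_sum]
  simp [map_smul, Module.End.smul_def]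

open LinearMap in
lemma evMap_bijective {N : Type} [Fintype N] [DecidableEq N] (ι : X →ₗ[A] (N → M))
    (hX : IsCogeneratedBy A M X) (hι : IsLeftApprox M ι)
    (hC : IsCogeneratedBy A M ((N → M) ⧸ range ι)) : Function.Bijective (evMap A M X) := by
  refine ⟨(injective_iff_map_eq_zero _).mpr fun x hx => hX x (LinearMap.congr_fun hx), fun α => ?_⟩
  obtain ⟨x, hx⟩ : (fun i => α (proj i ∘ₗ ι)) ∈ range ι := by
    refine (Submodule.Quotient.mk_eq_zero _).mp (hC _ fun φ => ?_)
    have h : (φ ∘ₗ (range ι).mkQ) ∘ₗ ι = 0 := by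
      ext x
      simp [(Submodule.Quotient.mk_eq_zero _).mpr (mem_range_self ι x)]
    simpa [h] using (map_comp_eq_apply_pi ι α (φ ∘ₗ (range ι).mkQ)).symm
  refine ⟨x, LinearMap.ext fun φ => ?_⟩
  obtain ⟨Ψ, rfl⟩ := hι φ
  rw [map_comp_eq_apply_pi ι α, ← hx]
  rfl

end Evaluation

section Approximation

variable {A X Q M : Type} [Ring A] [AddCommGroup X] [Module A X] [AddCommGroup Q] [Module A Q]
  [AddCommGroup M] [Module A M]

lemma IsLeftApprox.of_inAdd {ι : X →ₗ[A] Q} (hι : IsLeftApprox M ι) {Y : Type}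
    [AddCommGroup Y] [Module A Y] (hY : InAdd A M Y) : IsLeftApprox Y ι := by
  obtain ⟨n, s, r, hrs⟩ := hY
  intro φ
  choose Ψ hΨ using fun i => hι (LinearMap.proj i ∘ₗ s ∘ₗ φ)
  refine ⟨r ∘ₗ LinearMap.pi Ψ, LinearMap.ext fun x => ?_⟩
  have hx : LinearMap.pi Ψ (ι x) = s (φ x) := funext fun i => LinearMap.congr_fun (hΨ i) x
  simpa [hx] using LinearMap.congr_fun hrs (φ x)

lemma exists_isLeftApprox_of_finite [Module.Finite (Module.End A M) (X →ₗ[A] M)] :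
    ∃ (N : ℕ) (ι : X →ₗ[A] (Fin N → M)), IsLeftApprox M ι := by
  obtain ⟨N, f, hf⟩ := Module.Finite.exists_fin' (Module.End A M) (X →ₗ[A] M)
  refine ⟨N, LinearMap.pi fun i => f (Pi.single i 1), fun φ => ?_⟩
  obtain ⟨c, rfl⟩ := hf φ
  refine ⟨∑ i, c i ∘ₗ LinearMap.proj i, ?_⟩
  have hc : f c = ∑ i, c i • f (Pi.single i 1) := by
    simp_rw [← map_smul, ← map_sum, ← Pi.single_smul', smul_eq_mul, mul_one,
      Finset.univ_sum_single]
  ext x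
  rw [hc]
  simp [Module.End.smul_def]

end Approximation

section FiniteDimensional

variable (k : Type) {A : Type} [Field k] [Ring A] [Algebra k A]

lemma InSub.finiteDimensional [FiniteDimensional k A] {V : Type} [AddCommGroup V] [Module A V]
    [Module k V] [IsScalarTower k A V] (hV : InSub A V) : FiniteDimensional k V := by
  obtain ⟨n, j, hj⟩ := hV
  exact Module.Finite.of_injective (j.restrictScalars k) hj

lemma module_finite_end_linearMap {V W : Type} [AddCommGroup V] [Module A V] [Module k V]
    [IsScalarTower k A V] [FiniteDimensional k V] [AddCommGroup W] [Module A W] [Module k W]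
    [IsScalarTower k A W] [FiniteDimensional k W] :
    Module.Finite (Module.End A W) (V →ₗ[A] W) :=
  have : Module.Finite k (V →ₗ[A] W) := Module.Finite.of_injective
    (LinearMap.restrictScalarsₗ k A V W k) (LinearMap.restrictScalars_injective k)
  Module.Finite.of_restrictScalars_finite k (Module.End A W) (V →ₗ[A] W)

lemma InSub.exists_isLeftApprox [FiniteDimensional k A] {X M : Type} [AddCommGroup X]
    [Module A X] [AddCommGroup M] [Module A M] (hX : InSub A X) (hM : InSub A M) :
    ∃ (N : ℕ) (ι : X →ₗ[A] (Fin N → M)), IsLeftApprox M ι := by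
  let _ : Module k X := Module.compHom X (algebraMap k A)
  let _ : Module k M := Module.compHom M (algebraMap k A)
  have : IsScalarTower k A X := ⟨fun c a v => by rw [Algebra.smul_def]; exact mul_smul _ _ _⟩
  have : IsScalarTower k A M := ⟨fun c a v => by rw [Algebra.smul_def]; exact mul_smul _ _ _⟩
  have := hX.finiteDimensional k
  have := hM.finiteDimensional k
  have := module_finite_end_linearMap k (A := A) (V := X) (W := M)
  exact exists_isLeftApprox_of_finite

end FiniteDimensional

namespace LinearMap

variable {A K V E W : Type} [Ring A] [AddCommGroup K] [Module A K] [AddCommGroup V] [Module A V]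
  [AddCommGroup E] [Module A E] [AddCommGroup W] [Module A W]

abbrev Pushout (φ : K →ₗ[A] V) (f : K →ₗ[A] E) : Type :=
  (V × E) ⧸ range (φ.prod (-f))

namespace Pushout

variable (φ : K →ₗ[A] V) (f : K →ₗ[A] E)

def inl : V →ₗ[A] Pushout φ f := (range (φ.prod (-f))).mkQ ∘ₗ LinearMap.inl A V E

def inr : E →ₗ[A] Pushout φ f := (range (φ.prod (-f))).mkQ ∘ₗ LinearMap.inr A V E

lemma inl_comp : inl φ f ∘ₗ φ = inr φ f ∘ₗ f := by
  ext k
  exact (Submodule.Quotient.eq _).mpr ⟨k, by simp⟩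

lemma inl_add_inr (p : Pushout φ f) : ∃ v e, inl φ f v + inr φ f e = p := by
  obtain ⟨⟨v, e⟩, rfl⟩ := Submodule.mkQ_surjective _ p
  exact ⟨v, e, by simp [inl, inr, ← Submodule.Quotient.mk_add]⟩

def desc (a : V →ₗ[A] W) (b : E →ₗ[A] W) (h : a ∘ₗ φ = b ∘ₗ f) : Pushout φ f →ₗ[A] W :=
  (range (φ.prod (-f))).liftQ (a.coprod b) <| by
    rintro _ ⟨k, rfl⟩
    simpa [← sub_eq_add_neg, sub_eq_zero] using LinearMap.congr_fun h k

variable {φ f}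

@[simp] lemma desc_inl {a : V →ₗ[A] W} {b : E →ₗ[A] W} (h : a ∘ₗ φ = b ∘ₗ f) (v : V) :
    desc φ f a b h (inl φ f v) = a v := by
  simp [desc, inl]

@[simp] lemma desc_inr {a : V →ₗ[A] W} {b : E →ₗ[A] W} (h : a ∘ₗ φ = b ∘ₗ f) (e : E) :
    desc φ f a b h (inr φ f e) = b e := by
  simp [desc, inr]

lemma inl_injective (hf : Function.Injective f) : Function.Injective (inl φ f) := by
  refine (injective_iff_map_eq_zero _).mpr fun v hv => ?_
  obtain ⟨k, hk⟩ := (Submodule.Quotient.mk_eq_zero _).mp hv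
  obtain rfl : k = 0 := hf (by simpa using congr_arg Prod.snd hk)
  simpa using (congr_arg Prod.fst hk).symm

lemma inr_injective (hφ : Function.Injective φ) : Function.Injective (inr φ f) := by
  refine (injective_iff_map_eq_zero _).mpr fun e he => ?_
  obtain ⟨k, hk⟩ := (Submodule.Quotient.mk_eq_zero _).mp he
  obtain rfl : k = 0 := hφ (by simpa using congr_arg Prod.fst hk)
  simpa using (congr_arg Prod.snd hk).symm

lemma range_inl {Z : Type} [AddCommGroup Z] [Module A Z] {g : E →ₗ[A] Z}
    (hfg : range f = ker g) (h : 0 ∘ₗ φ = g ∘ₗ f) :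
    range (inl φ f) = ker (desc φ f 0 g h) := by
  refine le_antisymm ?_ fun p hp => ?_
  · rintro _ ⟨v, rfl⟩
    simp
  obtain ⟨v, e, rfl⟩ := inl_add_inr φ f p
  obtain ⟨k, rfl⟩ : e ∈ range f := by simpa [hfg] using hp
  exact ⟨v + φ k, by rw [map_add, ← comp_apply (inl φ f), inl_comp, comp_apply]⟩

lemma ker_desc_le_range_inr {Q : Type} [AddCommGroup Q] [Module A Q] {a : V →ₗ[A] Q}
    (hφa : ker a ≤ range φ) (h : a ∘ₗ φ = 0 ∘ₗ f) :
    ker (desc φ f a 0 h) ≤ range (inr φ f) := by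
  intro p hp
  obtain ⟨v, e, rfl⟩ := inl_add_inr φ f p
  obtain ⟨k, rfl⟩ : v ∈ range φ := hφa (by simpa using hp)
  exact ⟨f k + e, by rw [map_add, ← comp_apply (inr φ f), ← inl_comp, comp_apply]⟩

end Pushout

end LinearMap

section Ext1Zero

variable {A : Type} [Ring A]

lemma ext1Zero_of_projective {Z X : Type} [AddCommGroup Z] [Module A Z] [AddCommGroup X]
    [Module A X] [Module.Projective A Z] : Ext1Zero A Z X :=
  fun _ _ _ _ g _ hg _ => Module.projective_lifting_property g LinearMap.id hg

open LinearMap LinearMap.Pushout in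
/-- The step `Hom(Z, V) → Hom(Z, Q) → Ext¹(Z, ker π) → Ext¹(Z, V)` of the long exact sequence:
the extension of `Z` by `ker π` is pushed out to one by `V`, split there, and the splitting is
corrected by a lift of its image in `Q` so that it comes from the original extension. -/
lemma ext1Zero_ker_of_forall_lift {Z V Q : Type} [AddCommGroup Z] [Module A Z]
    [AddCommGroup V] [Module A V] [AddCommGroup Q] [Module A Q] (π : V →ₗ[A] Q)
    (hV : Ext1Zero A Z V) (hlift : ∀ G : Z →ₗ[A] Q, ∃ h : Z →ₗ[A] V, π ∘ₗ h = G) :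
    Ext1Zero A Z (ker π) := by
  intro E _ _ f g hf hg hfg
  have hgf : 0 ∘ₗ (ker π).subtype = g ∘ₗ f :=
    LinearMap.ext fun x => (mem_ker.mp (show f x ∈ ker g from hfg ▸ mem_range_self f x)).symm
  have hπ : π ∘ₗ (ker π).subtype = 0 ∘ₗ f := by
    ext x
    simp
  set j := inl (ker π).subtype f
  set gbar := desc _ f 0 g hgf
  set qbar := desc _ f π 0 hπ
  have hgbar : Function.Surjective gbar := fun z => by
    obtain ⟨e, rfl⟩ := hg z
    exact ⟨inr _ f e, desc_inr hgf e⟩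
  obtain ⟨σ, hσ⟩ := hV _ j gbar (inl_injective hf) hgbar (range_inl hfg hgf)
  obtain ⟨τ, hτ⟩ := hlift (qbar ∘ₗ σ)
  have hmem : ∀ z, (σ - j ∘ₗ τ) z ∈ range (inr (ker π).subtype f) := fun z =>
    ker_desc_le_range_inr (by simp) hπ <| by
      simpa [j, qbar, sub_eq_zero] using (LinearMap.congr_fun hτ z).symm
  let e := LinearEquiv.ofInjective _ (inr_injective (ker π).injective_subtype (f := f))
  refine ⟨e.symm.toLinearMap ∘ₗ (σ - j ∘ₗ τ).codRestrict _ hmem, LinearMap.ext fun z => ?_⟩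
  have he : inr _ f (e.symm ⟨_, hmem z⟩) = (σ - j ∘ₗ τ) z :=
    congr_arg Subtype.val (e.apply_symm_apply ⟨_, hmem z⟩)
  calc g (e.symm ⟨_, hmem z⟩) = gbar (inr _ f (e.symm ⟨_, hmem z⟩)) := (desc_inr hgf _).symm
    _ = gbar ((σ - j ∘ₗ τ) z) := by rw [he]
    _ = z := by simpa [j, gbar] using LinearMap.congr_fun hσ z

end Ext1Zero

section Lifting

variable {A : Type} [Ring A]

lemma exists_lift_of_injective {V Q P D : Type} [AddCommGroup V] [Module A V] [AddCommGroup Q]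
    [Module A Q] [AddCommGroup P] [Module A P] [AddCommGroup D] [Module A D]
    [Module.Injective A D] [Module.Projective A Q] (j : V →ₗ[A] Q) (hj : Function.Injective j)
    (π : P →ₗ[A] D) (hπ : Function.Surjective π) (G : V →ₗ[A] D) :
    ∃ h : V →ₗ[A] P, π ∘ₗ h = G := by
  obtain ⟨G', hG'⟩ := Module.Injective.out j hj G
  obtain ⟨h, rfl⟩ := Module.projective_lifting_property π G' hπ
  exact ⟨h ∘ₗ j, LinearMap.ext hG'⟩

open LinearMap in
lemma IsLeftApprox.exists_lift_mkQ {X Q P D M : Type} [AddCommGroup X] [Module A X]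
    [AddCommGroup Q] [Module A Q] [AddCommGroup P] [Module A P] [AddCommGroup D] [Module A D]
    [AddCommGroup M] [Module A M] {ι : X →ₗ[A] Q} (hι : IsLeftApprox M ι) (π : P →ₗ[A] D)
    (hK : InAdd A M (ker π)) (hlift : ∀ G : Q →ₗ[A] D, ∃ h : Q →ₗ[A] P, π ∘ₗ h = G)
    (G : Q ⧸ range ι →ₗ[A] D) : ∃ h : Q ⧸ range ι →ₗ[A] P, π ∘ₗ h = G := by
  obtain ⟨h, hh⟩ := hlift (G ∘ₗ (range ι).mkQ)
  have hhι : ∀ x, h (ι x) ∈ ker π := fun x => by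
    simp [← comp_apply π, hh, (Submodule.Quotient.mk_eq_zero _).mpr (mem_range_self ι x)]
  obtain ⟨u, hu⟩ := hι.of_inAdd hK ((h ∘ₗ ι).codRestrict _ hhι)
  refine ⟨(range ι).liftQ (h - (ker π).subtype ∘ₗ u) ?_, ?_⟩
  · rintro _ ⟨x, rfl⟩
    simpa [sub_eq_zero] using congr_arg Subtype.val (LinearMap.congr_fun hu x).symm
  · refine Submodule.linearMap_qext _ (LinearMap.ext fun q => ?_)
    simpa using LinearMap.congr_fun hh q

end Lifting

def KDual (k A : Type) [Field k] [Ring A] [Algebra k A] : Type := Module.Dual k A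

namespace KDual

variable {k A : Type} [Field k] [Ring A] [Algebra k A]

instance : AddCommGroup (KDual k A) := inferInstanceAs (AddCommGroup (Module.Dual k A))

instance : Module k (KDual k A) := inferInstanceAs (Module k (Module.Dual k A))

instance : FunLike (KDual k A) A k := inferInstanceAs (FunLike (Module.Dual k A) A k)

instance : LinearMapClass (KDual k A) k A k :=
  inferInstanceAs (LinearMapClass (Module.Dual k A) k A k)

instance : Module A (KDual k A) :=
  Module.compHom (R := Aᵐᵒᵖᵈᵐᵃ) (Module.Dual k A) (RingEquiv.opOp A).toRingHom

@[ext] lemma ext {f g : KDual k A} (h : ∀ x, f x = g x) : f = g := LinearMap.ext h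

@[simp] lemma zero_apply (x : A) : (0 : KDual k A) x = 0 := rfl

@[simp] lemma smul_apply (a : A) (f : KDual k A) (x : A) : (a • f) x = f (x * a) := rfl

instance : IsScalarTower k A (KDual k A) where
  smul_assoc c a f := by
    ext x
    change f (x * (c • a)) = c • f (x * a)
    rw [mul_smul_comm, map_smul]

instance [FiniteDimensional k A] : Module.Finite A (KDual k A) :=
  have : Module.Finite k (KDual k A) := inferInstanceAs (Module.Finite k (Module.Dual k A))
  Module.Finite.of_restrictScalars_finite k A (KDual k A)

def ofDual {V : Type} [AddCommGroup V] [Module A V] [Module k V] [IsScalarTower k A V]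
    (l : Module.Dual k V) : V →ₗ[A] KDual k A where
  toFun v := l ∘ₗ (LinearMap.toSpanSingleton A V v).restrictScalars k
  map_add' v w := by
    ext x
    change l (x • (v + w)) = l (x • v) + l (x • w)
    rw [smul_add, map_add]
  map_smul' a v := by
    ext x
    change l (x • a • v) = l ((x * a) • v)
    rw [mul_smul]

@[simp] lemma ofDual_apply {V : Type} [AddCommGroup V] [Module A V] [Module k V]
    [IsScalarTower k A V] (l : Module.Dual k V) (v : V) (x : A) : ofDual l v x = l (x • v) :=
  rfl

lemma baer : Module.Baer A (KDual k A) := by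
  intro I g
  obtain ⟨μ, hμ⟩ := LinearMap.exists_extend (p := I.restrictScalars k)
    ((LinearMap.applyₗ (1 : A)) ∘ₗ (g.restrictScalars k : I →ₗ[k] Module.Dual k A))
  refine ⟨ofDual μ, fun x hx => ?_⟩
  ext y
  calc μ (y • x) = g ⟨y • x, I.smul_mem y hx⟩ 1 := LinearMap.congr_fun hμ ⟨y • x, _⟩
    _ = g ⟨x, hx⟩ y := by rw [← SetLike.mk_smul_mk, map_smul, smul_apply, one_mul]

instance : Module.Injective A (KDual k A) := baer.injective

lemma isCogeneratedBy (V : Type) [AddCommGroup V] [Module A V] :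
    IsCogeneratedBy A (KDual k A) V := fun v hv => by
  let _ : Module k V := Module.compHom V (algebraMap k A)
  have : IsScalarTower k A V := ⟨fun c a v => by rw [Algebra.smul_def]; exact mul_smul _ _ _⟩
  refine (Module.forall_dual_apply_eq_zero_iff k v).mp fun l => ?_
  simpa using congr($(hv (ofDual l)) 1)

end KDual

theorem evaluation_is_isomorphism_general
    (k : Type) [Field k] (A : Type) [Ring A] [Algebra k A] [FiniteDimensional k A]
    (M : Type) [AddCommGroup M] [Module A M] (hM : IsClusterTilting A M)
    (X : Type) [AddCommGroup X] [Module A X] (hX : InSub A X) :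
    Function.Bijective (evMap A M X) := by
  obtain ⟨⟨m, jM, hjM⟩, hct⟩ := hM
  have hfree (t : ℕ) : InAdd A M (Fin t → A) ∧ Ext1Zero A M (Fin t → A) :=
    have h := hct _ ⟨t, LinearMap.id, Function.injective_id⟩
    ⟨h.2.mp ext1Zero_of_projective, h.1.mpr (h.2.mp ext1Zero_of_projective)⟩
  obtain ⟨t, π, hπ⟩ := Module.Finite.exists_fin' A (KDual k A)
  have hK : InAdd A M (LinearMap.ker π) :=
    (hct _ ⟨t, (LinearMap.ker π).subtype, Subtype.val_injective⟩).1.mp <|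
      ext1Zero_ker_of_forall_lift π (hfree t).2 (exists_lift_of_injective jM hjM π hπ)
  obtain ⟨N, ι, hι⟩ := hX.exists_isLeftApprox k ⟨m, jM, hjM⟩
  obtain ⟨n, jX, hjX⟩ := hX
  refine evMap_bijective ι ((hfree n).1.isCogeneratedBy.trans (.of_injective jX hjX)) hι ?_
  refine (KDual.isCogeneratedBy _).of_forall_lift (hfree t).1.isCogeneratedBy π ?_
  exact hι.exists_lift_mkQ π hK <| exists_lift_of_injective (LinearMap.piMap fun _ => jM)
    (Function.Injective.piMap fun _ => hjM) π hπ

theorem evaluation_is_isomorphism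
    (k : Type) [Field k] (A : Type) [Ring A] [Algebra k A] [FiniteDimensional k A]
    (hid : InjDimLE1 A)
    (M : Type) [AddCommGroup M] [Module A M] (hM : IsClusterTilting A M)
    (X : Type) [AddCommGroup X] [Module A X] (hX : InSub A X) :
    Function.Bijective (evMap A M X) :=
  evaluation_is_isomorphism_general k A M hM X hX
end
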